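/- arXiv:2404.11543 — 9 statements merged into one kernel-verified Lean document; each statement's English description precedes it below -/
import Mathlib

section
/- For any additive non-negative utility function u over a finite set of items M such that u assigns value at most 1 to each item, and any positive integer p, if u(M) ≥ 2p then the 1-out-of-p maximin share of u is at least 1; that is, there exists a partition of M into p parts each of which has u-value at least 1. -/
open Finset in
def IsPartition (M : Finset ℕ) {p : ℕ} (B : Fin p → Finset ℕ) : Prop :=
  (∀ i j : Fin p, i ≠ j → Disjoint (B i) (B j)) ∧ Finset.univ.biUnion B = M

noncomputable def mms (p : ℕ) (M : Finset ℕ) (u : ℕ → ℝ) : ℝ :=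
  sSup {v : ℝ | ∃ B : Fin p → Finset ℕ, IsPartition M B ∧ v = ⨅ i, (B i).sum u}

/-- An MMS^p allocation exists for every instance with `g` groups of sizes `ns`. -/
def MMSalloc (g : ℕ) (ns : Fin g → ℕ) (p : ℕ) : Prop :=
  ∀ (M : Finset ℕ) (u : (i : Fin g) → Fin (ns i) → ℕ → ℝ),
    (∀ i j ℓ, 0 ≤ u i j ℓ) →
    ∃ A : Fin g → Finset ℕ, IsPartition M A ∧
      ∀ (i : Fin g) (j : Fin (ns i)), mms p M (u i j) ≤ (A i).sum (u i j)

noncomputable def pMMS (g : ℕ) (ns : Fin g → ℕ) : ℕ := sInf {p | MMSalloc g ns p}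

open Finset in
lemma exists_small (M : Finset ℕ) (u : ℕ → ℝ)
    (hub : ∀ ℓ ∈ M, u ℓ ≤ 1) (h : (1:ℝ) ≤ M.sum u) :
    ∃ S ⊆ M, (1:ℝ) ≤ S.sum u ∧ S.sum u ≤ 2 := by
  classical
  set 𝒮 := M.powerset.filter (fun S => (1:ℝ) ≤ S.sum u) with h𝒮
  have hM : M ∈ 𝒮 := by simp [h𝒮, h]
  obtain ⟨S, hS, hmin⟩ := 𝒮.exists_min_image (fun S => S.card) ⟨M, hM⟩
  simp only [h𝒮, mem_filter, mem_powerset] at hS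
  refine ⟨S, hS.1, hS.2, ?_⟩
  by_contra hgt
  push_neg at hgt
  have hSne : S.Nonempty := by
    rcases S.eq_empty_or_nonempty with rfl | hne
    · exfalso; have := hS.2; simp at this; linarith
    · exact hne
  obtain ⟨x, hx⟩ := hSne
  have hsum := Finset.sum_erase_add S u hx
  have hux : u x ≤ 1 := hub x (hS.1 hx)
  have h1 : (1:ℝ) ≤ (S.erase x).sum u := by linarith
  have hmem : S.erase x ∈ 𝒮 := by
    simp only [h𝒮, mem_filter, mem_powerset]
    exact ⟨(erase_subset _ _).trans hS.1, h1⟩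
  have hle : S.card ≤ (S.erase x).card := hmin _ hmem
  have hlt := Finset.card_erase_lt_of_mem hx
  omega

open Finset in
lemma aux_part (u : ℕ → ℝ) (hnn : ∀ ℓ, 0 ≤ u ℓ) :
    ∀ (p : ℕ) (M : Finset ℕ), (∀ ℓ ∈ M, u ℓ ≤ 1) → (2 * (p+1) : ℝ) ≤ M.sum u →
    ∃ B : Fin (p+1) → Finset ℕ, IsPartition M B ∧ ∀ i, (1:ℝ) ≤ (B i).sum u := by
  intro p
  induction p with
  | zero =>
    intro M hub htot
    refine ⟨fun _ => M, ⟨fun i j hij => absurd (Fin.ext (by omega)) hij, by simp⟩,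
      fun i => by norm_num at htot; linarith⟩
  | succ n ih =>
    intro M hub htot
    have hn : (0:ℝ) ≤ (n:ℝ) := Nat.cast_nonneg n
    have h1' : (1:ℝ) ≤ M.sum u := by push_cast at htot; linarith
    obtain ⟨S, hSM, hS1, hS2⟩ := exists_small M u hub h1'
    have hdiff : (2 * (n+1) : ℝ) ≤ (M \ S).sum u := by
      have h := Finset.sum_sdiff (f := u) hSM
      push_cast at htot ⊢
      linarith
    obtain ⟨B', hB'part, hB'⟩ := ih (M \ S)
      (fun ℓ hℓ => hub ℓ (Finset.sdiff_subset hℓ)) hdiff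
    have hsub : ∀ k, B' k ⊆ M \ S := fun k =>
      hB'part.2 ▸ Finset.subset_biUnion_of_mem B' (mem_univ k)
    have hdisj : ∀ k, Disjoint S (B' k) := fun k =>
      (Finset.sdiff_disjoint.symm).mono_right (hsub k)
    refine ⟨Fin.cons S B', ⟨?_, ?_⟩, ?_⟩
    · intro i j hij
      induction i using Fin.cases with
      | zero =>
        induction j using Fin.cases with
        | zero => exact absurd rfl hij
        | succ j => simpa using hdisj j
      | succ i =>
        induction j using Fin.cases with
        | zero => simpa using (hdisj i).symm
        | succ j =>
          have hij' : i ≠ j := fun h => hij (by rw [h])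
          simpa using hB'part.1 i j hij'
    · ext x
      simp only [mem_biUnion, mem_univ, true_and]
      constructor
      · rintro ⟨i, hi⟩
        induction i using Fin.cases with
        | zero => exact hSM (by simpa using hi)
        | succ i =>
          have : x ∈ M \ S := hsub i (by simpa using hi)
          exact (Finset.mem_sdiff.mp this).1
      · intro hxM
        by_cases hxS : x ∈ S
        · exact ⟨0, by simpa using hxS⟩
        · have : x ∈ Finset.univ.biUnion B' := by
            rw [hB'part.2]; exact Finset.mem_sdiff.mpr ⟨hxM, hxS⟩
          obtain ⟨i, _, hi⟩ := Finset.mem_biUnion.mp this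
          exact ⟨i.succ, by simpa using hi⟩
    · intro i
      induction i using Fin.cases with
      | zero => simpa using hS1
      | succ i => simpa using hB' i

/-- If each item has utility at most 1 and the total utility is at least 2p,
then the 1-out-of-p MMS is at least 1: there is a partition into p parts each of value ≥ 1. -/
theorem stmt0 (M : Finset ℕ) (u : ℕ → ℝ) (hnn : ∀ ℓ, 0 ≤ u ℓ)
    (hub : ∀ ℓ ∈ M, u ℓ ≤ 1) (p : ℕ) (hp : 0 < p) (htot : (2 * p : ℝ) ≤ M.sum u) :
    ∃ B : Fin p → Finset ℕ, IsPartition M B ∧ ∀ i, (1 : ℝ) ≤ (B i).sum u := by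
  obtain ⟨n, rfl⟩ := Nat.exists_eq_succ_of_ne_zero hp.ne'
  exact aux_part u hnn n M hub (by push_cast at htot ⊢; linarith)
end

section
/- For any positive integers m, k, s, t with m ≥ k + s·t, there exists an (m, m−k, t)-covering design of size at most binomial(t + ⌈k/s⌉, t); that is, C(m, m−k, t) ≤ binomial(t + ⌈k/s⌉, t). -/
def IsCoveringDesign (m s t : ℕ) (D : Finset (Finset ℕ)) : Prop :=
  (∀ S ∈ D, S ⊆ Finset.range m ∧ S.card = s) ∧
  ∀ T ⊆ Finset.range m, T.card ≤ t → ∃ S ∈ D, T ⊆ S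

noncomputable def coverNum (m s t : ℕ) : ℕ :=
  sInf {r | ∃ D : Finset (Finset ℕ), IsCoveringDesign m s t D ∧ D.card = r}

/-- The i-th block: an interval of length `s` (possibly truncated at `s*t+k`). -/
def Blk (s t k i : ℕ) : Finset ℕ := Finset.Ico (s*i) (min (s*(i+1)) (s*t+k))

lemma Blk_disjoint {s t k : ℕ} {i j : ℕ} (hij : i ≠ j) :
    Disjoint (Blk s t k i) (Blk s t k j) := by
  rw [Finset.disjoint_left]
  intro x hx hx'
  simp only [Blk, Finset.mem_Ico, lt_min_iff] at hx hx'
  rcases lt_or_gt_of_ne hij with hlt | hlt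
  · have : s * (i+1) ≤ s * j := Nat.mul_le_mul_left s hlt
    omega
  · have : s * (j+1) ≤ s * i := Nat.mul_le_mul_left s hlt
    omega

noncomputable def KSet (s t k : ℕ) (Q : Finset ℕ) : Finset ℕ :=
  if h : k ≤ (Q.biUnion (Blk s t k)).card then (Finset.exists_subset_card_eq h).choose else ∅

lemma KSet_spec {s t k : ℕ} {Q : Finset ℕ} (h : k ≤ (Q.biUnion (Blk s t k)).card) :
    KSet s t k Q ⊆ Q.biUnion (Blk s t k) ∧ (KSet s t k Q).card = k := by
  rw [KSet, dif_pos h]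
  exact (Finset.exists_subset_card_eq h).choose_spec

lemma card_biUnion_ge (s t k q : ℕ) (hk : 0 < k) (hs : 0 < s)
    (hsq : k ≤ s*q) (hsq' : s*(q-1) + 1 ≤ k) (hq1 : 1 ≤ q)
    {Q : Finset ℕ} (hQ : Q ⊆ Finset.range (t+q)) (hQc : Q.card = q) :
    k ≤ (Q.biUnion (Blk s t k)).card := by
  rw [Finset.card_biUnion (fun i _ j _ hij => Blk_disjoint hij)]
  have hcard : ∀ i, (Blk s t k i).card = min (s*(i+1)) (s*t+k) - s*i := by
    intro i; rw [Blk, Nat.card_Ico]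
  have hfull : ∀ i ∈ Q, i ≠ t + q - 1 → (Blk s t k i).card = s := by
    intro i hi hne
    have hi' : i < t + q := Finset.mem_range.mp (hQ hi)
    have : i + 1 ≤ t + q - 1 := by omega
    have h1 : s * (i+1) ≤ s * (t + q - 1) := Nat.mul_le_mul_left s this
    have h2 : s * (t + q - 1) = s * t + s * (q - 1) := by
      rw [← Nat.mul_add]; congr 1; omega
    rw [hcard i]
    have : s * (i+1) ≤ s*t + k := by omega
    rw [min_eq_left this]
    have : s * (i+1) = s * i + s := by ring
    omega
  by_cases hlast : (t + q - 1) ∈ Q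
  · rw [← Finset.sum_erase_add _ _ hlast]
    have h1 : ∑ i ∈ Q.erase (t+q-1), (Blk s t k i).card = (q-1) * s := by
      rw [Finset.sum_congr rfl (fun i hi => hfull i (Finset.mem_of_mem_erase hi)
        (Finset.ne_of_mem_erase hi))]
      rw [Finset.sum_const, smul_eq_mul, Finset.card_erase_of_mem hlast, hQc]
    have h2 : (Blk s t k (t+q-1)).card = k - s * (q-1) := by
      rw [hcard]
      have e1 : s * (t + q - 1 + 1) = s * t + s * q := by rw [← Nat.mul_add]; congr 1; omega
      have e2 : s * (t + q - 1) = s * t + s * (q - 1) := by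
        rw [← Nat.mul_add]; congr 1; omega
      rw [e1, e2, min_eq_right (by omega)]
      omega
    rw [h1, h2]
    have : (q - 1) * s = s * (q - 1) := Nat.mul_comm _ _
    omega
  · have h1 : ∑ i ∈ Q, (Blk s t k i).card = q * s := by
      rw [Finset.sum_congr rfl (fun i hi => hfull i hi (by rintro rfl; exact hlast hi))]
      rw [Finset.sum_const, smul_eq_mul, hQc]
    rw [h1]
    have : q * s = s * q := Nat.mul_comm _ _
    omega

theorem stmt2 (m k s t : ℕ) (hm : 0 < m) (hk : 0 < k) (hs : 0 < s) (ht : 0 < t)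
    (h : k + s * t ≤ m) :
    coverNum m (m - k) t ≤ Nat.choose (t + (k + s - 1) / s) t := by
  set q := (k + s - 1) / s with hqdef
  have hdm : s * q + (k + s - 1) % s = k + s - 1 := by
    rw [hqdef]; exact Nat.div_add_mod _ _
  have hmod : (k + s - 1) % s < s := Nat.mod_lt _ hs
  have hsq : k ≤ s * q := by omega
  have hq1 : 1 ≤ q := by
    rcases Nat.eq_zero_or_pos q with h0 | h1
    · rw [h0, Nat.mul_zero] at hsq; omega
    · exact h1
  have hsq' : s * (q - 1) + 1 ≤ k := by
    have : s * (q - 1) = s * q - s := by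
      rcases Nat.exists_eq_add_of_le hq1 with ⟨r, hr⟩
      rw [hr]; simp [Nat.mul_add, Nat.add_comm]
    omega
  -- the design
  set D : Finset (Finset ℕ) :=
    (Finset.powersetCard q (Finset.range (t+q))).image
      (fun Q => Finset.range m \ KSet s t k Q) with hD
  have hBlk_sub : ∀ i, Blk s t k i ⊆ Finset.range m := by
    intro i x hx
    simp only [Blk, Finset.mem_Ico, lt_min_iff] at hx
    exact Finset.mem_range.mpr (by omega)
  have hKQ : ∀ Q ∈ Finset.powersetCard q (Finset.range (t+q)),
      KSet s t k Q ⊆ Finset.range m ∧ (KSet s t k Q).card = k := by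
    intro Q hQ
    rw [Finset.mem_powersetCard] at hQ
    have hcard := card_biUnion_ge s t k q hk hs hsq hsq' hq1 hQ.1 hQ.2
    obtain ⟨h1, h2⟩ := KSet_spec hcard
    refine ⟨h1.trans ?_, h2⟩
    intro x hx
    obtain ⟨i, _, hxi⟩ := Finset.mem_biUnion.mp hx
    exact hBlk_sub i hxi
  have hcover : IsCoveringDesign m (m-k) t D := by
    constructor
    · intro S hS
      obtain ⟨Q, hQ, rfl⟩ := Finset.mem_image.mp hS
      obtain ⟨hsub, hcard⟩ := hKQ Q hQ
      refine ⟨Finset.sdiff_subset, ?_⟩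
      rw [Finset.card_sdiff_of_subset hsub, Finset.card_range, hcard]
    · intro T hT hTc
      -- blocks meeting T
      set A : Finset ℕ := (Finset.range (t+q)).filter
        (fun i => (T ∩ Blk s t k i).Nonempty) with hA
      have hAsub : A ⊆ T.image (· / s) := by
        intro i hi
        rw [hA, Finset.mem_filter] at hi
        obtain ⟨x, hx⟩ := hi.2
        rw [Finset.mem_inter] at hx
        refine Finset.mem_image.mpr ⟨x, hx.1, ?_⟩
        have hx2 := hx.2
        simp only [Blk, Finset.mem_Ico, lt_min_iff] at hx2
        have e1 : i * s = s * i := Nat.mul_comm _ _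
        have e2 : (i+1) * s = s * i + s := by ring
        have e3 : s * (i+1) = s * i + s := by ring
        have : x / s = i := Nat.div_eq_of_lt_le (by omega) (by omega)
        omega
      have hAc : A.card ≤ t :=
        le_trans (Finset.card_le_card hAsub) (le_trans Finset.card_image_le hTc)
      have hBc : q ≤ (Finset.range (t+q) \ A).card := by
        have hA' : A ⊆ Finset.range (t+q) := Finset.filter_subset _ _
        have := Finset.card_sdiff_of_subset hA'
        rw [Finset.card_range] at this
        omega
      obtain ⟨Q, hQsub, hQcard⟩ := Finset.exists_subset_card_eq hBc
      have hQrange : Q ⊆ Finset.range (t+q) := hQsub.trans Finset.sdiff_subset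
      have hQmem : Q ∈ Finset.powersetCard q (Finset.range (t+q)) :=
        Finset.mem_powersetCard.mpr ⟨hQrange, hQcard⟩
      refine ⟨Finset.range m \ KSet s t k Q, Finset.mem_image_of_mem _ hQmem, ?_⟩
      intro x hx
      rw [Finset.mem_sdiff]
      refine ⟨hT hx, ?_⟩
      intro hxK
      have hKsub := (KSet_spec (card_biUnion_ge s t k q hk hs hsq hsq' hq1 hQrange hQcard)).1
      obtain ⟨i, hiQ, hxi⟩ := Finset.mem_biUnion.mp (hKsub hxK)
      have hiA : i ∉ A := (Finset.mem_sdiff.mp (hQsub hiQ)).2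
      exact hiA (Finset.mem_filter.mpr ⟨hQrange hiQ, ⟨x, Finset.mem_inter.mpr ⟨hx, hxi⟩⟩⟩)
  have hmem : D.card ∈ {r | ∃ D : Finset (Finset ℕ), IsCoveringDesign m (m-k) t D ∧ D.card = r} :=
    ⟨D, hcover, rfl⟩
  refine le_trans (Nat.sInf_le hmem) ?_
  calc D.card ≤ (Finset.powersetCard q (Finset.range (t+q))).card := Finset.card_image_le
    _ = (t+q).choose q := by rw [Finset.card_powersetCard, Finset.card_range]
    _ = (t+q).choose t := by
        rw [← Nat.choose_symm (by omega : t ≤ t + q)]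
        congr 1; omega
end

section
/- For any positive integers m ≥ s ≥ t, there exists an (m,s,t)-covering design of size at most (binomial(m,t)/binomial(s,t)) · (1 + ln(binomial(s,t))); that is, C(m,s,t) ≤ (C(m,t)/C(s,t))·(1 + ln C(s,t)) where C(a,b) denotes the binomial coefficient. -/
open Finset Real

noncomputable def greedyBound (x u : ℝ) : ℝ :=
  if u ≤ x then u else x * (1 + log (u / x))

lemma greedyBound_eq_of_le {x u : ℝ} (hx : 0 < x) (hxu : x ≤ u) :
    greedyBound x u = x * (1 + log (u / x)) := by
  unfold greedyBound
  split_ifs with hux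
  · rw [le_antisymm hux hxu, div_self hx.ne', log_one]; ring
  · rfl

lemma greedyBound_add_mul_min_le {x u v : ℝ} (hx : 0 < x) (hu : 0 < u) (hvu : v ≤ u) :
    greedyBound x v + (u - v) * min 1 (x / u) ≤ greedyBound x u := by
  rcases le_or_gt u x with hux | hxu
  · have hmin : min 1 (x / u) = 1 := min_eq_left ((one_le_div hu).2 hux)
    rw [greedyBound, greedyBound, if_pos (hvu.trans hux), if_pos hux, hmin]
    linarith
  have hmin : min 1 (x / u) = x / u := min_eq_right ((div_le_one hu).2 hxu.le)
  rw [hmin, greedyBound_eq_of_le hx hxu.le]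
  rcases le_or_gt x v with hxv | hvx
  · have hv : 0 < v := hx.trans_le hxv
    have hlog : 1 - v / u ≤ log (u / v) := by
      simpa only [inv_div] using one_sub_inv_le_log_of_pos (div_pos hu hv)
    have hsplit : log (u / x) = log (u / v) + log (v / x) := by
      rw [← log_mul (by positivity) (by positivity), div_mul_div_cancel₀ hv.ne']
    rw [greedyBound_eq_of_le hx hxv, hsplit]
    calc x * (1 + log (v / x)) + (u - v) * (x / u)
        = x * (1 + log (v / x)) + x * (1 - v / u) := by field_simp
      _ ≤ x * (1 + log (v / x)) + x * log (u / v) := by gcongr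
      _ = x * (1 + (log (u / v) + log (v / x))) := by ring
  · have hlog : 1 - x / u ≤ log (u / x) := by
      simpa only [inv_div] using one_sub_inv_le_log_of_pos (div_pos hu hx)
    have hfrac : 0 ≤ 1 - x / u := by rw [sub_nonneg, div_le_one hu]; exact hxu.le
    rw [greedyBound, if_pos hvx.le]
    calc v + (u - v) * (x / u) = x + v * (1 - x / u) := by field_simp; ring
      _ ≤ x + x * (1 - x / u) := by gcongr
      _ ≤ x * (1 + log (u / x)) := by linarith [mul_le_mul_of_nonneg_left hlog hx.le]

lemma greedyBound_sub_add_one_le {x u c : ℝ} (hx : 0 < x) (hu : 0 < u) (hc : 1 ≤ c)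
    (hcx : u ≤ x * c) : greedyBound x (u - c) + 1 ≤ greedyBound x u := by
  have hmin : 1 ≤ c * min 1 (x / u) := by
    rw [mul_min_of_nonneg _ _ (by linarith), mul_one]
    refine le_min hc ?_
    rw [← mul_div_assoc, le_div_iff₀ hu, one_mul, mul_comm]
    exact hcx
  have := greedyBound_add_mul_min_le hx hu (show u - c ≤ u by linarith)
  rw [sub_sub_cancel] at this
  linarith

section Greedy

variable {α β : Type*} {B : Finset β} (r : α → β → Prop) [∀ a b, Decidable (r a b)] {d : ℕ}

theorem exists_mul_card_le_card_mul_card_filter (hB : B.Nonempty) {P : Finset α}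
    (hdeg : ∀ a ∈ P, d ≤ #{b ∈ B | r a b}) :
    ∃ b ∈ B, d * #P ≤ #B * #{a ∈ P | r a b} := by
  apply exists_le_of_sum_le hB
  have hcount : #P • d ≤ ∑ a ∈ P, #{b ∈ B | r a b} := card_nsmul_le_sum P _ d hdeg
  have hswap : ∑ a ∈ P, #{b ∈ B | r a b} = ∑ b ∈ B, #{a ∈ P | r a b} :=
    sum_card_bipartiteAbove_eq_sum_card_bipartiteBelow r
  rw [hswap] at hcount
  rw [sum_const, smul_eq_mul, ← mul_sum]
  rw [smul_eq_mul, mul_comm] at hcount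
  exact Nat.mul_le_mul_left _ hcount

theorem exists_cover_card_le_greedyBound [DecidableEq β] (hd : 0 < d) (hB : B.Nonempty)
    (P : Finset α) (hdeg : ∀ a ∈ P, d ≤ #{b ∈ B | r a b}) :
    ∃ D ⊆ B, (∀ a ∈ P, ∃ b ∈ D, r a b) ∧ (#D : ℝ) ≤ greedyBound (#B / d) #P := by
  have hx : (0 : ℝ) < #B / d := by have := hB.card_pos; positivity
  induction P using Finset.strongInduction with
  | H P ih =>
  rcases P.eq_empty_or_nonempty with rfl | hP
  · refine ⟨∅, empty_subset _, by simp, ?_⟩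
    simp only [card_empty, Nat.cast_zero]
    rw [greedyBound, if_pos hx.le]
  obtain ⟨b, hb, hcover⟩ := exists_mul_card_le_card_mul_card_filter r hB hdeg
  have hc : 0 < #{a ∈ P | r a b} :=
    Nat.pos_of_mul_pos_left ((Nat.mul_pos hd hP.card_pos).trans_le hcover)
  have hrest : {a ∈ P | ¬r a b} ⊂ P := by
    obtain ⟨a, ha⟩ := card_pos.1 hc
    exact filter_ssubset.2 ⟨a, (mem_filter.1 ha).1, not_not.2 (mem_filter.1 ha).2⟩
  obtain ⟨D, hDB, hD, hDcard⟩ :=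
    ih _ hrest fun a ha => hdeg a (mem_filter.1 ha).1
  refine ⟨insert b D, insert_subset hb hDB, fun a ha => ?_, ?_⟩
  · by_cases hab : r a b
    · exact ⟨b, mem_insert_self b D, hab⟩
    · obtain ⟨b', hb', hab'⟩ := hD a (mem_filter.2 ⟨ha, hab⟩)
      exact ⟨b', mem_insert_of_mem hb', hab'⟩
  have hsplit : (#{a ∈ P | ¬r a b} : ℝ) = #P - #{a ∈ P | r a b} := by
    rw [eq_sub_iff_add_eq', ← Nat.cast_add, card_filter_add_card_filter_not]
  have hstep := greedyBound_sub_add_one_le hx (u := #P) (c := #{a ∈ P | r a b})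
    (by exact_mod_cast hP.card_pos) (by exact_mod_cast hc) (by
      rw [div_mul_eq_mul_div, le_div_iff₀ (by positivity), mul_comm]; exact_mod_cast hcover)
  calc (#(insert b D) : ℝ) ≤ #D + 1 := by exact_mod_cast card_insert_le b D
    _ ≤ greedyBound (#B / d) #P := by rw [hsplit] at hDcard; linarith

end Greedy

lemma coverNum_le_card {m s t : ℕ} {D : Finset (Finset ℕ)} (hD : IsCoveringDesign m s t D) :
    coverNum m s t ≤ #D :=
  Nat.sInf_le ⟨D, hD, rfl⟩

lemma isCoveringDesign_of_covers_powersetCard {m s t : ℕ} {D : Finset (Finset ℕ)} (htm : t ≤ m)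
    (hD : D ⊆ (range m).powersetCard s)
    (hcover : ∀ T ∈ (range m).powersetCard t, ∃ S ∈ D, T ⊆ S) : IsCoveringDesign m s t D := by
  refine ⟨fun S hS => mem_powersetCard.1 (hD hS), fun T hT hTt => ?_⟩
  obtain ⟨T', hTT', hT'm, hT't⟩ :=
    exists_subsuperset_card_eq hT hTt (by rwa [card_range])
  obtain ⟨S, hS, hT'S⟩ := hcover T' (mem_powersetCard.2 ⟨hT'm, hT't⟩)
  exact ⟨S, hS, hTT'.trans hT'S⟩

theorem stmt3_general (m s t : ℕ) (hts : t ≤ s) (hsm : s ≤ m) :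
    (coverNum m s t : ℝ) ≤
      ((Nat.choose m t : ℝ) / (Nat.choose s t : ℝ)) * (1 + Real.log (Nat.choose s t)) := by
  have hdeg : ∀ T ∈ (range m).powersetCard t,
      (m - t).choose (s - t) ≤ #{A ∈ (range m).powersetCard s | T ⊆ A} := by
    intro T hT
    rw [mem_powersetCard] at hT
    rw [card_filter_powersetCard_subset _ _ _ hT.1 (hT.2 ▸ hts), card_range, hT.2]
  obtain ⟨D, hDB, hD, hDcard⟩ := exists_cover_card_le_greedyBound (fun T A => T ⊆ A)
    (Nat.choose_pos (Nat.sub_le_sub_right hsm t)) (powersetCard_nonempty.2 (by simpa)) _ hdeg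
  have hS : (1 : ℝ) ≤ s.choose t := by exact_mod_cast Nat.choose_pos hts
  have hx : ((m.choose s : ℕ) : ℝ) / (m - t).choose (s - t) = m.choose t / s.choose t := by
    rw [div_eq_div_iff (by exact_mod_cast (Nat.choose_pos (Nat.sub_le_sub_right hsm t)).ne')
      (by positivity)]
    exact_mod_cast Nat.choose_mul hts
  have hN : (0 : ℝ) < m.choose t := by exact_mod_cast Nat.choose_pos (hts.trans hsm)
  simp only [card_powersetCard, card_range, hx] at hDcard
  calc (coverNum m s t : ℝ) ≤ #D := by
        exact_mod_cast coverNum_le_card (isCoveringDesign_of_covers_powersetCard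
          (hts.trans hsm) hDB hD)
    _ ≤ greedyBound (m.choose t / s.choose t) (m.choose t) := hDcard
    _ = _ := by
      rw [greedyBound_eq_of_le (by positivity) (div_le_self hN.le hS), div_div_cancel₀ hN.ne']

theorem stmt3 (m s t : ℕ) (ht : 0 < t) (hts : t ≤ s) (hsm : s ≤ m) :
    (coverNum m s t : ℝ) ≤
      ((Nat.choose m t : ℝ) / (Nat.choose s t : ℝ)) * (1 + Real.log (Nat.choose s t)) :=
  stmt3_general m s t hts hsm
end

section
/- For the covering-design lower bound construction, if an agent's utility assigns value 1/(m−(p−1)) to items in a set S of size m−(p−1) and value 1 to the remaining p−1 items, then the agent's 1-out-of-p maximin share over the m items equals 1. -/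
theorem stmt8 (m p : ℕ) (hp : 0 < p) (hpm : p ≤ m)
    (S : Finset ℕ) (hS : S ⊆ Finset.range m) (hcard : S.card = m - (p - 1)) :
    mms p (Finset.range m)
      (fun ℓ => if ℓ ∈ S then (1 : ℝ) / ((m - (p - 1) : ℕ) : ℝ) else 1) = 1 := by
  obtain ⟨q, rfl⟩ := Nat.exists_eq_succ_of_ne_zero hp.ne'
  simp only [Nat.succ_sub_one] at hcard ⊢
  set u : ℕ → ℝ := fun ℓ => if ℓ ∈ S then (1 : ℝ) / ((m - q : ℕ) : ℝ) else 1 with hu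
  have hqm : q < m := hpm
  have hc0 : (0:ℕ) < m - q := Nat.sub_pos_of_lt hqm
  have hcR : ((m - q : ℕ) : ℝ) ≠ 0 := by positivity
  have huS : ∀ ℓ ∈ S, u ℓ = 1 / ((m - q : ℕ) : ℝ) := by
    intro ℓ hℓ; simp [hu, hℓ]
  have huT : ∀ ℓ ∈ Finset.range m \ S, u ℓ = 1 := by
    intro ℓ hℓ
    simp only [Finset.mem_sdiff] at hℓ
    simp [hu, hℓ.2]
  have hTcard : (Finset.range m \ S).card = q := by
    rw [Finset.card_sdiff_of_subset hS, Finset.card_range, hcard]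
    omega
  have hSsum : ∑ ℓ ∈ S, u ℓ = 1 := by
    rw [Finset.sum_congr rfl huS, Finset.sum_const, hcard, nsmul_eq_mul]
    field_simp
  have htot : ∑ ℓ ∈ Finset.range m, u ℓ = q + 1 := by
    rw [← Finset.sum_sdiff hS, hSsum, Finset.sum_congr rfl huT, Finset.sum_const, hTcard]
    simp
  -- key upper bound
  have hkey : ∀ v ∈ {v : ℝ | ∃ B : Fin (q+1) → Finset ℕ,
      IsPartition (Finset.range m) B ∧ v = ⨅ i, (B i).sum u}, v ≤ 1 := by
    rintro v ⟨B, ⟨hdisj, hcover⟩, rfl⟩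
    have hbdd : BddBelow (Set.range fun i => (B i).sum u) :=
      (Set.finite_range _).bddBelow
    have hsumB : ∑ i, (B i).sum u = q + 1 := by
      rw [← htot, ← hcover, Finset.sum_biUnion]
      intro i _ j _ hij
      exact hdisj i j hij
    by_contra h
    push_neg at h
    have hall : ∀ i : Fin (q+1), 1 < (B i).sum u := fun i =>
      lt_of_lt_of_le h (ciInf_le hbdd i)
    have : (Finset.univ : Finset (Fin (q+1))).sum (fun _ => (1:ℝ)) <
        ∑ i, (B i).sum u :=
      Finset.sum_lt_sum_of_nonempty Finset.univ_nonempty (fun i _ => hall i)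
    rw [hsumB] at this
    simp at this
  -- membership: explicit partition
  have hmem : (1:ℝ) ∈ {v : ℝ | ∃ B : Fin (q+1) → Finset ℕ,
      IsPartition (Finset.range m) B ∧ v = ⨅ i, (B i).sum u} := by
    set T := Finset.range m \ S with hT
    set f : Fin q → ℕ := fun j => (T.orderIsoOfFin hTcard j : ℕ) with hf
    have hfT : ∀ j, f j ∈ T := fun j => (T.orderIsoOfFin hTcard j).2
    have hfS : ∀ j, f j ∉ S := by
      intro j
      have := hfT j
      rw [hT, Finset.mem_sdiff] at this
      exact this.2
    have hfR : ∀ j, f j ∈ Finset.range m := by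
      intro j
      have := hfT j
      rw [hT, Finset.mem_sdiff] at this
      exact this.1
    have hfinj : Function.Injective f := by
      intro a b hab
      exact (T.orderIsoOfFin hTcard).injective (Subtype.ext hab)
    set B : Fin (q+1) → Finset ℕ := Fin.cons S (fun j => {f j}) with hB
    have hB0 : B 0 = S := rfl
    have hBs : ∀ j : Fin q, B j.succ = {f j} := fun j => rfl
    refine ⟨B, ⟨?_, ?_⟩, ?_⟩
    · intro i j hij
      rcases Fin.eq_zero_or_eq_succ i with rfl | ⟨i', rfl⟩ <;>
        rcases Fin.eq_zero_or_eq_succ j with rfl | ⟨j', rfl⟩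
      · exact absurd rfl hij
      · rw [hB0, hBs]
        simp [hfS j']
      · rw [hB0, hBs]
        simp [hfS i']
      · rw [hBs, hBs]
        have hne : i' ≠ j' := fun hc => hij (by rw [hc])
        simp only [Finset.disjoint_singleton]
        exact hfinj.ne hne
    · apply Finset.Subset.antisymm
      · intro ℓ hℓ
        rw [Finset.mem_biUnion] at hℓ
        obtain ⟨i, _, hi⟩ := hℓ
        rcases Fin.eq_zero_or_eq_succ i with rfl | ⟨i', rfl⟩
        · exact hS (hB0 ▸ hi)
        · rw [hBs, Finset.mem_singleton] at hi
          exact hi ▸ hfR i'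
      · intro ℓ hℓ
        rw [Finset.mem_biUnion]
        by_cases hℓS : ℓ ∈ S
        · exact ⟨0, Finset.mem_univ _, hB0 ▸ hℓS⟩
        · have hℓT : ℓ ∈ T := by rw [hT, Finset.mem_sdiff]; exact ⟨hℓ, hℓS⟩
          obtain ⟨j, hj⟩ := (T.orderIsoOfFin hTcard).surjective ⟨ℓ, hℓT⟩
          refine ⟨j.succ, Finset.mem_univ _, ?_⟩
          rw [hBs, Finset.mem_singleton]
          show ℓ = ((T.orderIsoOfFin hTcard) j : ℕ)
          rw [hj]
    · have hval : ∀ i : Fin (q+1), (B i).sum u = 1 := by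
        intro i
        rcases Fin.eq_zero_or_eq_succ i with rfl | ⟨i', rfl⟩
        · rw [hB0]; exact hSsum
        · rw [hBs, Finset.sum_singleton]
          simp [hu, hfS i']
      simp only [hval]
      exact (ciInf_const).symm
  unfold mms
  exact le_antisymm (Real.sSup_le hkey zero_le_one) (le_csSup ⟨1, hkey⟩ hmem)
end

section
/- If {S_1,…,S_n} is an (m, m−(p−1), t)-covering design and an agent's utility gives value 1/(m−(p−1)) to items in S_j and 1 to other items, then for every subset T of [m] with |T| ≤ t, there is an index j such that agent j's utility for T is less than 1. Consequently, in the covering-design instance, any bundle satisfying all n agents' 1-out-of-p MMS (which equals 1 for each agent) must contain at least t+1 items. -/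
theorem stmt9 (m p t n : ℕ) (hp : 0 < p) (ht : 0 < t) (hn : 0 < n)
    (hmt : t < m - (p - 1))
    (S : Fin n → Finset ℕ)
    (hsub : ∀ j, S j ⊆ Finset.range m)
    (hcards : ∀ j, (S j).card = m - (p - 1))
    (hcover : ∀ T ⊆ Finset.range m, T.card ≤ t → ∃ j, T ⊆ S j) :
    (∀ T ⊆ Finset.range m, T.card ≤ t →
      ∃ j : Fin n,
        T.sum (fun ℓ => if ℓ ∈ S j then (1 : ℝ) / ((m - (p - 1) : ℕ) : ℝ) else 1) < 1) ∧
    (∀ T ⊆ Finset.range m,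
      (∀ j : Fin n,
        (1 : ℝ) ≤ T.sum (fun ℓ => if ℓ ∈ S j then (1 : ℝ) / ((m - (p - 1) : ℕ) : ℝ) else 1)) →
      t + 1 ≤ T.card) := by
  have hM : (0 : ℝ) < ((m - (p - 1) : ℕ) : ℝ) := by
    have : 0 < m - (p - 1) := lt_trans ht hmt
    exact_mod_cast this
  have key : ∀ T ⊆ Finset.range m, T.card ≤ t →
      ∃ j : Fin n,
        T.sum (fun ℓ => if ℓ ∈ S j then (1 : ℝ) / ((m - (p - 1) : ℕ) : ℝ) else 1) < 1 := by
    intro T hT hcard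
    obtain ⟨j, hj⟩ := hcover T hT hcard
    refine ⟨j, ?_⟩
    have hsum : T.sum (fun ℓ => if ℓ ∈ S j then (1 : ℝ) / ((m - (p - 1) : ℕ) : ℝ) else 1)
        = T.card * (1 / ((m - (p - 1) : ℕ) : ℝ)) := by
      rw [Finset.sum_congr rfl (fun ℓ hℓ => if_pos (hj hℓ))]
      simp [mul_comm]
    rw [hsum, div_eq_mul_inv, one_mul, ← div_eq_mul_inv, div_lt_one hM]
    have : (T.card : ℝ) ≤ t := by exact_mod_cast hcard
    have h2 : (t : ℝ) < ((m - (p - 1) : ℕ) : ℝ) := by exact_mod_cast hmt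
    linarith
  refine ⟨key, fun T hT hall => ?_⟩
  by_contra h
  push_neg at h
  obtain ⟨j, hj⟩ := key T hT (by omega)
  exact absurd (hall j) (not_le.mpr hj)
end

section
/- Kleitman's correlation inequality: if 𝒮_1, …, 𝒮_k are monotone (upward-closed) families of subsets of a finite set M, then for a uniformly random subset S of M, Pr[S ∈ ⋂_{i∈[k]} 𝒮_i] ≥ ∏_{i∈[k]} Pr[S ∈ 𝒮_i]. -/
open Finset

/-- Two-family Kleitman for upper sets within `M.powerset`. -/
lemma kleitman_two (M : Finset ℕ) (A B : Finset (Finset ℕ))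
    (hA : A ⊆ M.powerset) (hB : B ⊆ M.powerset)
    (hAm : ∀ S ∈ A, ∀ S', S ⊆ S' → S' ∈ M.powerset → S' ∈ A)
    (hBm : ∀ S ∈ B, ∀ S', S ⊆ S' → S' ∈ M.powerset → S' ∈ B) :
    A.card * B.card ≤ 2 ^ M.card * (A ∩ B).card := by
  have hlow : ∀ (C : Finset (Finset ℕ)), C ⊆ M.powerset →
      (∀ S ∈ C, ∀ S', S ⊆ S' → S' ∈ M.powerset → S' ∈ C) →
      IsLowerSet ((M.powerset \ C : Finset (Finset ℕ)) : Set (Finset ℕ)) := by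
    intro C hC hCm t u hut ht
    simp only [coe_sdiff, Set.mem_diff, mem_coe, Finset.mem_powerset] at ht ⊢
    refine ⟨hut.trans ht.1, fun hu => ht.2 ?_⟩
    exact hCm u hu t hut (Finset.mem_powerset.mpr ht.1)
  have h := (hlow A hA hAm).le_card_inter_finset' (hlow B hB hBm)
    (fun t ht => by simpa using Finset.mem_powerset.mp (Finset.mem_sdiff.mp ht).1)
    (fun t ht => by simpa using Finset.mem_powerset.mp (Finset.mem_sdiff.mp ht).1)
  have hpow : (M.powerset).card = 2 ^ M.card := Finset.card_powerset M
  have hinter : (M.powerset \ A) ∩ (M.powerset \ B) = M.powerset \ (A ∪ B) := by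
    ext t; simp [Finset.mem_sdiff]; tauto
  rw [hinter] at h
  have cA : (M.powerset \ A).card = 2 ^ M.card - A.card := by
    rw [Finset.card_sdiff_of_subset hA, hpow]
  have cB : (M.powerset \ B).card = 2 ^ M.card - B.card := by
    rw [Finset.card_sdiff_of_subset hB, hpow]
  have hABsub : A ∪ B ⊆ M.powerset := Finset.union_subset hA hB
  have cAB : (M.powerset \ (A ∪ B)).card = 2 ^ M.card - (A ∪ B).card := by
    rw [Finset.card_sdiff_of_subset hABsub, hpow]
  rw [cA, cB, cAB] at h
  have hAle : A.card ≤ 2 ^ M.card := hpow ▸ Finset.card_le_card hA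
  have hBle : B.card ≤ 2 ^ M.card := hpow ▸ Finset.card_le_card hB
  have hUle : (A ∪ B).card ≤ 2 ^ M.card := hpow ▸ Finset.card_le_card hABsub
  have hui : (A ∪ B).card + (A ∩ B).card = A.card + B.card :=
    Finset.card_union_add_card_inter A B
  zify [hAle, hBle, hUle] at h ⊢
  nlinarith [h, hui]

/-- Kleitman's correlation inequality for monotone (upward-closed) families. -/
theorem stmt12 (M : Finset ℕ) (k : ℕ) (F : Fin k → Finset (Finset ℕ))
    (hsub : ∀ i, F i ⊆ M.powerset)
    (hmono : ∀ i, ∀ S ∈ F i, ∀ S', S ⊆ S' → S' ∈ M.powerset → S' ∈ F i) :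
    ∏ i, ((F i).card : ℝ) / 2 ^ M.card ≤
      (((M.powerset.filter (fun S => ∀ i, S ∈ F i)).card : ℝ)) / 2 ^ M.card := by
  induction k with
  | zero =>
      simp [Finset.filter_true_of_mem, Finset.card_powerset]
  | succ n ih =>
      set T : Finset (Finset ℕ) :=
        M.powerset.filter (fun S => ∀ i : Fin n, S ∈ F i.succ) with hT
      have hTsub : T ⊆ M.powerset := Finset.filter_subset _ _
      have hTmono : ∀ S ∈ T, ∀ S', S ⊆ S' → S' ∈ M.powerset → S' ∈ T := by
        intro S hS S' hSS' hS'
        rw [hT, Finset.mem_filter] at hS ⊢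
        exact ⟨hS', fun i => hmono i.succ S (hS.2 i) S' hSS' hS'⟩
      have hIH : ∏ i : Fin n, ((F i.succ).card : ℝ) / 2 ^ M.card ≤ (T.card : ℝ) / 2 ^ M.card :=
        ih (fun i => F i.succ) (fun i => hsub i.succ)
          (fun i => hmono i.succ)
      have hk2 := kleitman_two M (F 0) T (hsub 0) hTsub (hmono 0) hTmono
      have hinter : F 0 ∩ T = M.powerset.filter (fun S => ∀ i : Fin (n+1), S ∈ F i) := by
        ext S
        simp only [Finset.mem_inter, hT, Finset.mem_filter]
        constructor
        · rintro ⟨h0, hP, hs⟩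
          exact ⟨hP, fun i => Fin.cases h0 hs i⟩
        · rintro ⟨hP, hall⟩
          exact ⟨hall 0, hP, fun i => hall i.succ⟩
      have hpow : (0 : ℝ) < 2 ^ M.card := by positivity
      rw [Fin.prod_univ_succ]
      calc ((F 0).card : ℝ) / 2 ^ M.card * ∏ i : Fin n, ((F i.succ).card : ℝ) / 2 ^ M.card
          ≤ ((F 0).card : ℝ) / 2 ^ M.card * ((T.card : ℝ) / 2 ^ M.card) := by
            apply mul_le_mul_of_nonneg_left hIH
            positivity
        _ ≤ (((F 0 ∩ T).card : ℝ)) / 2 ^ M.card := by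
            rw [div_mul_div_comm, div_le_div_iff₀ (by positivity) hpow]
            have : ((F 0).card : ℝ) * T.card ≤ 2 ^ M.card * ((F 0 ∩ T).card : ℝ) := by
              exact_mod_cast hk2
            nlinarith [this, hpow]
        _ = _ := by rw [hinter]
end

section
/- For any agent a with additive non-negative utility over a finite item set M and any positive integer p, the probability that a uniformly random subset T of M satisfies u_a(T) ≥ MMS^p_a(M) is strictly greater than 1 − 1/2^{p−1}, where MMS^p_a(M) is the 1-out-of-p maximin share of a. -/
open Finset

private lemma sum_nonneg' (u : ℕ → ℝ) (hnn : ∀ ℓ, 0 ≤ u ℓ) (s : Finset ℕ) : 0 ≤ s.sum u :=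
  Finset.sum_nonneg fun i _ => hnn i

private lemma bool_helper {x y z : Bool} (h1 : x ≠ y) (h2 : x ≠ z) : y = z := by
  cases x <;> cases y <;> cases z <;> simp_all

/-- The MMS value is attained by some partition. -/
private lemma mms_attained (M : Finset ℕ) (u : ℕ → ℝ) (p : ℕ) (hp : 0 < p) :
    ∃ B : Fin p → Finset ℕ, IsPartition M B ∧ ∀ i, mms p M u ≤ (B i).sum u := by
  classical
  set S := {v : ℝ | ∃ B : Fin p → Finset ℕ, IsPartition M B ∧ v = ⨅ i, (B i).sum u} with hS
  have hne : S.Nonempty := by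
    refine ⟨_, ⟨fun i => if i = (⟨0, hp⟩ : Fin p) then M else ∅, ⟨?_, ?_⟩, rfl⟩⟩
    · intro i j hij
      by_cases hi : i = (⟨0, hp⟩ : Fin p) <;> by_cases hj : j = (⟨0, hp⟩ : Fin p) <;> simp_all
    · ext a
      simp only [mem_biUnion, mem_univ, true_and]
      constructor
      · rintro ⟨i, hi⟩
        by_cases h : i = (⟨0, hp⟩ : Fin p) <;> simp_all
      · intro ha
        exact ⟨⟨0, hp⟩, by simp [ha]⟩
  have hfin : S.Finite := by
    have hsub : S ⊆ (fun B : Fin p → Finset ℕ => ⨅ i, (B i).sum u) ''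
        (Set.pi Set.univ fun _ => (↑M.powerset : Set (Finset ℕ))) := by
      rintro v ⟨B, hB, rfl⟩
      refine ⟨B, ?_, rfl⟩
      intro i _
      simp only [coe_powerset, Set.mem_preimage, Set.mem_powerset_iff, coe_subset]
      rw [← hB.2]
      exact subset_biUnion_of_mem B (mem_univ i)
    exact (Set.Finite.image _ (Set.Finite.pi fun _ => M.powerset.finite_toSet)).subset hsub
  have hmem : mms p M u ∈ S := hne.csSup_mem hfin
  obtain ⟨B, hBp, hBv⟩ := hmem
  refine ⟨B, hBp, fun i => ?_⟩
  rw [hBv]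
  exact ciInf_le (Set.finite_range _).bddBelow i

/-- Key counting lemma: the number of "failing" subsets times 2^p is less than 2^(|M|+1). -/
private lemma key_count {p : ℕ} (M : Finset ℕ) (u : ℕ → ℝ) (hnn : ∀ ℓ, 0 ≤ u ℓ)
    (hp : 0 < p) (B : Fin p → Finset ℕ)
    (hdisj : ∀ i j : Fin p, i ≠ j → Disjoint (B i) (B j))
    (hcover : Finset.univ.biUnion B = M) (μ : ℝ) (hμ : ∀ i, μ ≤ (B i).sum u) :
    (M.powerset.filter (fun T => T.sum u < μ)).card * 2 ^ p < 2 ^ (M.card + 1) := by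
  classical
  have hBM : ∀ i, B i ⊆ M := fun i => by
    rw [← hcover]; exact subset_biUnion_of_mem B (mem_univ i)
  by_cases hμ0 : μ ≤ 0
  · have he : M.powerset.filter (fun T => T.sum u < μ) = ∅ := by
      apply filter_eq_empty_iff.2
      intro T _
      exact not_lt.2 (le_trans hμ0 (sum_nonneg' u hnn T))
    rw [he]
    simpa using pow_pos (by norm_num : (0:ℕ) < 2) (M.card + 1)
  push_neg at hμ0
  set A : (Fin p → Bool) → Finset ℕ := fun σ => univ.biUnion (fun i => if σ i then B i else ∅)
    with hAdef
  set flp : (Fin p → Bool) → Finset ℕ → Finset ℕ := fun σ T => symmDiff T (A σ) with hflpdef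
  have hAsub : ∀ σ, A σ ⊆ M := by
    intro σ
    apply biUnion_subset.2
    intro i _
    split
    · exact hBM i
    · exact empty_subset _
  have hflpsub : ∀ σ T, T ⊆ M → flp σ T ⊆ M := by
    intro σ T hT
    refine Finset.Subset.trans ?_ (union_subset hT (hAsub σ))
    have h := symmDiff_le_sup (a := T) (b := A σ)
    simpa using h
  have hinv : ∀ σ T, flp σ (flp σ T) = T := fun σ T => symmDiff_symmDiff_cancel_right (A σ) T
  have hAinter : ∀ σ j, A σ ∩ B j = if σ j then B j else ∅ := by
    intro σ j
    cases hσj : σ j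
    · rw [if_neg (by simp)]
      apply eq_empty_iff_forall_notMem.2
      intro a ha
      obtain ⟨haA, haj⟩ := mem_inter.1 ha
      obtain ⟨i, -, hi⟩ := mem_biUnion.1 haA
      by_cases hσi : σ i = true
      · rw [if_pos hσi] at hi
        have hij : i ≠ j := by
          rintro rfl
          rw [hσj] at hσi
          exact Bool.noConfusion hσi
        exact (Finset.disjoint_left.1 (hdisj i j hij)) hi haj
      · rw [if_neg hσi] at hi
        exact notMem_empty a hi
    · rw [if_pos rfl]
      apply inter_eq_right.2
      intro a ha
      exact mem_biUnion.2 ⟨j, mem_univ j, by rw [if_pos hσj]; exact ha⟩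
  have hflpinter : ∀ σ T j, flp σ T ∩ B j = if σ j then B j \ T else T ∩ B j := by
    intro σ T j
    have h1 : flp σ T ∩ B j = symmDiff (T ∩ B j) (A σ ∩ B j) := by
      have := inf_symmDiff_distrib_right (α := Finset ℕ) T (A σ) (B j)
      simpa using this
    rw [h1, hAinter]
    cases hσj : σ j
    · rw [if_neg (by simp), if_neg (by simp)]
      ext a
      simp [Finset.mem_symmDiff]
    · rw [if_pos rfl, if_pos rfl]
      ext a
      simp only [Finset.mem_symmDiff, mem_inter, mem_sdiff]
      tauto
  have hdecomp : ∀ T' : Finset ℕ, T' ⊆ M → T'.sum u = ∑ j, (T' ∩ B j).sum u := by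
    intro T' hT'
    have h1 : univ.biUnion (fun j => T' ∩ B j) = T' := by
      ext a
      simp only [mem_biUnion, mem_univ, true_and, mem_inter]
      constructor
      · rintro ⟨j, ha, _⟩; exact ha
      · intro ha
        have haM : a ∈ M := hT' ha
        rw [← hcover] at haM
        obtain ⟨j, -, hj⟩ := mem_biUnion.1 haM
        exact ⟨j, ha, hj⟩
    conv_lhs => rw [← h1]
    exact Finset.sum_biUnion fun i _ j _ hij =>
      (hdisj i j hij).mono inter_subset_right inter_subset_right
  have hval : ∀ σ T, T ⊆ M →
      (flp σ T).sum u = ∑ j, (if σ j then (B j \ T).sum u else (T ∩ B j).sum u) := by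
    intro σ T hT
    rw [hdecomp _ (hflpsub σ T hT)]
    refine Finset.sum_congr rfl fun j _ => ?_
    rw [hflpinter σ T j]
    exact apply_ite (fun s : Finset ℕ => s.sum u) _ _ _
  have hterm_nonneg : ∀ (σ : Fin p → Bool) (T : Finset ℕ) (j : Fin p),
      0 ≤ (if σ j then (B j \ T).sum u else (T ∩ B j).sum u) := by
    intro σ T j
    split <;> exact sum_nonneg' u hnn _
  have hpair : ∀ (j : Fin p) (T : Finset ℕ),
      (B j \ T).sum u + (T ∩ B j).sum u = (B j).sum u := by
    intro j T
    rw [inter_comm, add_comm]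
    exact Finset.sum_inter_add_sum_sdiff (B j) T u
  -- Hamming lemma: two failing sign vectors differ in at most one coordinate
  have hham : ∀ T, T ⊆ M → ∀ σ τ : Fin p → Bool, (flp σ T).sum u < μ → (flp τ T).sum u < μ →
      (univ.filter fun i => σ i ≠ τ i).card ≤ 1 := by
    intro T hT σ τ hσ hτ
    by_contra hD
    push_neg at hD
    set D := univ.filter fun i => σ i ≠ τ i with hDdef
    have hsum : ∑ j ∈ D, (B j).sum u ≤ (flp σ T).sum u + (flp τ T).sum u := by
      rw [hval σ T hT, hval τ T hT, ← Finset.sum_add_distrib]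
      have step1 : ∑ j ∈ D, (B j).sum u = ∑ j ∈ D,
          ((if σ j then (B j \ T).sum u else (T ∩ B j).sum u) +
           (if τ j then (B j \ T).sum u else (T ∩ B j).sum u)) := by
        refine Finset.sum_congr rfl fun j hj => ?_
        have hne : σ j ≠ τ j := (mem_filter.1 hj).2
        cases hσj : σ j <;> cases hτj : τ j
        · exact absurd (hσj.trans hτj.symm) hne
        · norm_num
          linarith [hpair j T]
        · norm_num
          linarith [hpair j T]
        · exact absurd (hσj.trans hτj.symm) hne
      rw [step1]
      refine Finset.sum_le_sum_of_subset_of_nonneg (subset_univ D) fun j _ _ =>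
        add_nonneg (hterm_nonneg σ T j) (hterm_nonneg τ T j)
    have h2D : (2 : ℕ) ≤ D.card := hD
    have hlow : (2 : ℝ) * μ ≤ ∑ j ∈ D, (B j).sum u := by
      calc (2 : ℝ) * μ ≤ (D.card : ℝ) * μ := by
            apply mul_le_mul_of_nonneg_right _ (le_of_lt hμ0)
            exact_mod_cast h2D
        _ = ∑ _j ∈ D, μ := by rw [Finset.sum_const, nsmul_eq_mul]
        _ ≤ ∑ j ∈ D, (B j).sum u := Finset.sum_le_sum fun j _ => hμ j
    linarith
  -- at most two failing sign vectors per subset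
  have hcard2 : ∀ T, T ⊆ M → (univ.filter fun σ => (flp σ T).sum u < μ).card ≤ 2 := by
    intro T hT
    by_contra h
    push_neg at h
    obtain ⟨a, b, c, ha, hb, hc, hab, hac, hbc⟩ := Finset.two_lt_card_iff.1 h
    have fa := (mem_filter.1 ha).2
    have fb := (mem_filter.1 hb).2
    have fc := (mem_filter.1 hc).2
    have hsingle : ∀ x y : Fin p → Bool, x ≠ y → (flp x T).sum u < μ → (flp y T).sum u < μ →
        ∃ i, (univ.filter fun k => x k ≠ y k) = {i} := by
      intro x y hxy hx hy
      have h1 := hham T hT x y hx hy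
      have h0 : (univ.filter fun k => x k ≠ y k).Nonempty := by
        obtain ⟨i, hi⟩ := Function.ne_iff.1 hxy
        exact ⟨i, mem_filter.2 ⟨mem_univ i, hi⟩⟩
      exact Finset.card_eq_one.1 (le_antisymm h1 h0.card_pos)
    obtain ⟨i, hi⟩ := hsingle a b hab fa fb
    obtain ⟨i', hi'⟩ := hsingle a c hac fa fc
    have hDbc := hham T hT b c fb fc
    have hib : ∀ k, a k ≠ b k ↔ k = i := by
      intro k
      constructor
      · intro hk
        have hk2 : k ∈ univ.filter fun k => a k ≠ b k := mem_filter.2 ⟨mem_univ k, hk⟩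
        rw [hi] at hk2
        simpa using hk2
      · rintro rfl
        have hk2 : k ∈ ({k} : Finset (Fin p)) := mem_singleton_self k
        rw [← hi] at hk2
        exact (mem_filter.1 hk2).2
    have hic : ∀ k, a k ≠ c k ↔ k = i' := by
      intro k
      constructor
      · intro hk
        have hk2 : k ∈ univ.filter fun k => a k ≠ c k := mem_filter.2 ⟨mem_univ k, hk⟩
        rw [hi'] at hk2
        simpa using hk2
      · rintro rfl
        have hk2 : k ∈ ({k} : Finset (Fin p)) := mem_singleton_self k
        rw [← hi'] at hk2
        exact (mem_filter.1 hk2).2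
    by_cases hii : i = i'
    · subst hii
      apply hbc
      funext k
      by_cases hk : k = i
      · subst hk
        exact bool_helper ((hib k).2 rfl) ((hic k).2 rfl)
      · have h1 : a k = b k := by
          by_contra h'
          exact hk ((hib k).1 h')
        have h2 : a k = c k := by
          by_contra h'
          exact hk ((hic k).1 h')
        rw [← h1, ← h2]
    · have h1 : b i ≠ c i := by
        have hai : a i ≠ b i := (hib i).2 rfl
        have hai' : a i = c i := by
          by_contra h'
          exact hii ((hic i).1 h')
        intro h''
        exact hai (hai'.trans h''.symm)
      have h2 : b i' ≠ c i' := by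
        have hai : a i' = b i' := by
          by_contra h'
          exact hii ((hib i').1 h').symm
        have hai' : a i' ≠ c i' := (hic i').2 rfl
        intro h''
        exact hai' (hai.trans h'')
      have hsub2 : ({i, i'} : Finset (Fin p)) ⊆ univ.filter fun k => b k ≠ c k := by
        intro k hk
        rcases Finset.mem_insert.1 hk with rfl | hk'
        · exact mem_filter.2 ⟨mem_univ k, h1⟩
        · rw [Finset.mem_singleton.1 hk']
          exact mem_filter.2 ⟨mem_univ i', h2⟩
      have hc2 := Finset.card_le_card hsub2
      rw [Finset.card_pair hii] at hc2
      omega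
  -- at most one failing sign vector for T = M
  have hMone : (univ.filter fun σ => (flp σ M).sum u < μ).card ≤ 1 := by
    have hall : ∀ ρ : Fin p → Bool, (flp ρ M).sum u < μ → ρ = fun _ => true := by
      intro ρ hρ
      funext j
      by_contra hj
      have hj' : ρ j = false := by
        cases hρj : ρ j
        · rfl
        · exact absurd hρj hj
      have hterm : (if ρ j then (B j \ M).sum u else (M ∩ B j).sum u) = (B j).sum u := by
        rw [if_neg (by rw [hj']; simp)]
        congr 1
        exact inter_eq_right.2 (hBM j)
      have hge : (B j).sum u ≤ (flp ρ M).sum u := by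
        rw [hval ρ M subset_rfl, ← hterm]
        exact Finset.single_le_sum (fun k _ => hterm_nonneg ρ M k) (mem_univ j)
      linarith [hμ j]
    apply Finset.card_le_one.2
    intro σ hσ τ hτ
    rw [hall σ (mem_filter.1 hσ).2, hall τ (mem_filter.1 hτ).2]
  -- double counting
  have hswap : ∑ T ∈ M.powerset, (univ.filter fun σ => (flp σ T).sum u < μ).card
      = ∑ σ : Fin p → Bool, (M.powerset.filter fun T => (flp σ T).sum u < μ).card := by
    simp_rw [Finset.card_filter]
    exact Finset.sum_comm
  have hbij : ∀ σ, (M.powerset.filter fun T => (flp σ T).sum u < μ).card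
      = (M.powerset.filter fun T => T.sum u < μ).card := by
    intro σ
    apply Finset.card_bij (fun T _ => flp σ T)
    · intro T hT
      obtain ⟨h1, h2⟩ := mem_filter.1 hT
      exact mem_filter.2 ⟨mem_powerset.2 (hflpsub σ T (mem_powerset.1 h1)), h2⟩
    · intro T1 h1 T2 h2 he
      have h3 := congrArg (flp σ) he
      rwa [hinv, hinv] at h3
    · intro T' hT'
      obtain ⟨h1, h2⟩ := mem_filter.1 hT'
      refine ⟨flp σ T', mem_filter.2 ⟨mem_powerset.2 (hflpsub σ T' (mem_powerset.1 h1)), ?_⟩,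
        hinv σ T'⟩
      rw [hinv]
      exact h2
  have hlt : ∑ T ∈ M.powerset, (univ.filter fun σ => (flp σ T).sum u < μ).card
      < 2 ^ (M.card + 1) := by
    calc ∑ T ∈ M.powerset, (univ.filter fun σ => (flp σ T).sum u < μ).card
        < ∑ _T ∈ M.powerset, 2 := by
          apply Finset.sum_lt_sum
          · intro T hT
            exact hcard2 T (mem_powerset.1 hT)
          · exact ⟨M, mem_powerset_self M, lt_of_le_of_lt hMone one_lt_two⟩
      _ = 2 ^ (M.card + 1) := by
          rw [Finset.sum_const, card_powerset, smul_eq_mul, pow_succ]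
  have heq : (M.powerset.filter fun T => T.sum u < μ).card * 2 ^ p
      = ∑ σ : Fin p → Bool, (M.powerset.filter fun T => (flp σ T).sum u < μ).card := by
    rw [Finset.sum_congr rfl (fun σ _ => hbij σ), Finset.sum_const, card_univ]
    simp [mul_comm]
  rw [heq, ← hswap]
  exact hlt

/-- A uniformly random subset of M gives an agent her 1-out-of-p MMS with
probability strictly greater than 1 - 1/2^(p-1). -/
theorem stmt13 (M : Finset ℕ) (u : ℕ → ℝ) (hnn : ∀ ℓ, 0 ≤ u ℓ) (p : ℕ) (hp : 0 < p) :
    1 - 1 / 2 ^ (p - 1) <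
      ((M.powerset.filter (fun T => mms p M u ≤ T.sum u)).card : ℝ) / 2 ^ M.card := by
  classical
  obtain ⟨B, hBpart, hBge⟩ := mms_attained M u p hp
  have key := key_count M u hnn hp B hBpart.1 hBpart.2 (mms p M u) hBge
  set μ := mms p M u with hμdef
  set f := (M.powerset.filter fun T => T.sum u < μ).card with hfdef
  set s := (M.powerset.filter fun T => μ ≤ T.sum u).card with hsdef
  have hfs : s + f = 2 ^ M.card := by
    have h := Finset.card_filter_add_card_filter_not
      (s := M.powerset) (p := fun T => μ ≤ T.sum u)
    simp only [not_le, Finset.filter_congr_decidable] at h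
    rw [card_powerset] at h
    exact h
  have hf : f * 2 ^ (p - 1) < 2 ^ M.card := by
    have hpp : p - 1 + 1 = p := Nat.succ_pred_eq_of_pos hp
    have h2 : f * 2 ^ (p - 1) * 2 < 2 ^ M.card * 2 := by
      calc f * 2 ^ (p - 1) * 2 = f * 2 ^ p := by
            rw [mul_assoc, ← pow_succ, hpp]
        _ < 2 ^ (M.card + 1) := key
        _ = 2 ^ M.card * 2 := pow_succ 2 M.card
    omega
  have h2m : (0 : ℝ) < 2 ^ M.card := by positivity
  have h2p : (0 : ℝ) < 2 ^ (p - 1) := by positivity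
  have hsr : (s : ℝ) = 2 ^ M.card - f := by
    have hcast : (s : ℝ) + f = 2 ^ M.card := by exact_mod_cast congrArg (Nat.cast (R := ℝ)) hfs
    linarith
  have hfr : (f : ℝ) * 2 ^ (p - 1) < 2 ^ M.card := by exact_mod_cast hf
  have hflt : (f : ℝ) < 2 ^ M.card / 2 ^ (p - 1) := (lt_div_iff₀ h2p).2 hfr
  rw [hsr, lt_div_iff₀ h2m, sub_mul, one_mul, div_mul_eq_mul_div, one_mul]
  linarith
end

section
/- Let p ≥ 1 and let B_1,…,B_p be disjoint finite sets with additive utility u such that u(B_i) ≥ v for all i. Suppose each B_i is split into B_i^1, B_i^2 with u(B_i^1) ≥ u(B_i^2), and u(B_1^2) ≤ ⋯ ≤ u(B_p^2). Then for any choice of indices j_1,…,j_p ∈ {1,2} with (j_1,…,j_{p−1}) ≠ (2,…,2), we have u(⋃_{i∈[p]} B_i^{j_i}) ≥ v. -/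
theorem stmt14 (p : ℕ) (hp : 1 ≤ p) (u : ℕ → ℝ) (hnn : ∀ ℓ, 0 ≤ u ℓ)
    (v : ℝ) (hv : 0 ≤ v)
    (B B1 B2 : Fin p → Finset ℕ)
    (hdisj : ∀ i j : Fin p, i ≠ j → Disjoint (B i) (B j))
    (hsplit : ∀ i, B1 i ∪ B2 i = B i)
    (hsplitdisj : ∀ i, Disjoint (B1 i) (B2 i))
    (hval : ∀ i, v ≤ (B i).sum u)
    (hbig : ∀ i, (B2 i).sum u ≤ (B1 i).sum u)
    (hsorted : ∀ i j : Fin p, i ≤ j → (B2 i).sum u ≤ (B2 j).sum u)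
    (j : Fin p → Fin 2)
    (hnotall : ∃ i : Fin p, (i : ℕ) < p - 1 ∧ j i = 0) :
    v ≤ (Finset.univ.biUnion (fun i => if j i = 0 then B1 i else B2 i)).sum u := by
  obtain ⟨i0, hi0, hj0⟩ := hnotall
  have hp' : p - 1 < p := Nat.sub_lt (by omega) one_pos
  set last : Fin p := ⟨p - 1, hp'⟩ with hlast
  have hne : i0 ≠ last := by
    intro h
    rw [h] at hi0
    simp [hlast] at hi0
  set C : Fin p → Finset ℕ := fun i => if j i = 0 then B1 i else B2 i with hC
  have hsub : ∀ i, C i ⊆ B i := by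
    intro i
    rw [hC]
    dsimp only
    split
    · rw [← hsplit i]; exact Finset.subset_union_left
    · rw [← hsplit i]; exact Finset.subset_union_right
  have hdisjC : Disjoint (C i0) (C last) :=
    (hdisj i0 last hne).mono (hsub i0) (hsub last)
  have hsubU : C i0 ∪ C last ⊆ Finset.univ.biUnion C := by
    intro x hx
    rcases Finset.mem_union.mp hx with h | h
    · exact Finset.mem_biUnion.mpr ⟨i0, Finset.mem_univ _, h⟩
    · exact Finset.mem_biUnion.mpr ⟨last, Finset.mem_univ _, h⟩
  have h1 : (C i0).sum u = (B1 i0).sum u := by rw [hC]; simp [hj0]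
  have h2 : (B2 i0).sum u ≤ (C last).sum u := by
    have hle : (B2 i0).sum u ≤ (B2 last).sum u :=
      hsorted i0 last (Fin.le_def.mpr (by simp only [hlast]; omega))
    rw [hC]
    dsimp only
    split
    · exact hle.trans (hbig last)
    · exact hle
  have h3 : v ≤ (B1 i0).sum u + (B2 i0).sum u := by
    have := hval i0
    rwa [← hsplit i0, Finset.sum_union (hsplitdisj i0)] at this
  calc v ≤ (C i0).sum u + (C last).sum u := by linarith
    _ = (C i0 ∪ C last).sum u := (Finset.sum_union hdisjC).symm
    _ ≤ _ := Finset.sum_le_sum_of_subset_of_nonneg hsubU (fun x _ _ => hnn x)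
end

section
/- If positive integers n_1, n_2, p satisfy (1 − 1/2^{p−1})^{n_1} + (1 − 1/2^{p−1})^{n_2} ≥ 1, then p_MMS(n_1, n_2) ≤ p: in every two-group instance with group sizes n_1 and n_2, there exists an allocation of the items into two bundles giving every agent at least her 1-out-of-p maximin share. -/
open Finset
open scoped symmDiff


section Core
variable {β : Type*} [DecidableEq β]

lemma sum_union_le_add {A B : Finset β} {u : β → ℝ} (hu : ∀ x, 0 ≤ u x) :
    (A ∪ B).sum u ≤ A.sum u + B.sum u := by
  rw [← Finset.sum_union_inter]
  have : 0 ≤ (A ∩ B).sum u := Finset.sum_nonneg fun x _ => hu x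
  linarith

lemma core_count (M : Finset β) (u : β → ℝ) (hu : ∀ x, 0 ≤ u x) {p : ℕ}
    (B : Fin p → Finset β)
    (hdisj : ∀ i j : Fin p, i ≠ j → Disjoint (B i) (B j))
    (hcover : Finset.univ.biUnion B = M)
    {μ : ℝ} (hμ : 0 < μ) (hB : ∀ i, μ ≤ (B i).sum u) :
    (M.powerset.filter (fun S => S.sum u < μ)).card + 1 ≤ 2 ^ (M.card + 1 - p) := by
  classical
  -- parts are nonempty
  have hne : ∀ i, (B i).Nonempty := by
    intro i
    rcases (B i).eq_empty_or_nonempty with h | h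
    · exfalso; have := hB i; rw [h] at this; simp at this; linarith
    · exact h
  have hBM : ∀ i, B i ⊆ M := fun i => hcover ▸ Finset.subset_biUnion_of_mem B (mem_univ i)
  have part_unique : ∀ {a : β} {i j : Fin p}, a ∈ B i → a ∈ B j → i = j := by
    intro a i j hi hj
    by_contra hij
    exact (Finset.disjoint_left.mp (hdisj i j hij)) hi hj
  set x : Fin p → β := fun i => (hne i).choose with hxdef
  have hx : ∀ i, x i ∈ B i := fun i => (hne i).choose_spec
  have hxinj : Function.Injective x := fun i j hij => part_unique (hij ▸ hx i) (hx j)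
  set X : Finset β := Finset.univ.image x with hXdef
  have hXM : X ⊆ M := by
    intro a ha
    rw [hXdef, Finset.mem_image] at ha
    obtain ⟨i, -, rfl⟩ := ha
    exact hBM i (hx i)
  have hXcard : X.card = p := by
    rw [hXdef, Finset.card_image_of_injective _ hxinj, Finset.card_univ, Fintype.card_fin]
  have hpM : p ≤ M.card := hXcard ▸ Finset.card_le_card hXM
  set UU : Finset (Fin p) → Finset β := fun I => I.biUnion B with hUUdef
  have hUM : ∀ I, UU I ⊆ M := by
    intro I a ha
    rw [hUUdef, Finset.mem_biUnion] at ha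
    obtain ⟨i, -, hi⟩ := ha
    exact hBM i hi
  have mem_UU : ∀ {a : β} {I : Finset (Fin p)}, a ∈ UU I ↔ ∃ i ∈ I, a ∈ B i := by
    intro a I; rw [hUUdef]; exact Finset.mem_biUnion
  have hUx : ∀ (j : Fin p) (I : Finset (Fin p)), x j ∈ UU I ↔ j ∈ I := by
    intro j I
    rw [mem_UU]
    constructor
    · rintro ⟨i, hiI, hi⟩
      rw [part_unique (hx j) hi]; exact hiI
    · intro hj
      exact ⟨j, hj, hx j⟩
  have UU_symmDiff : ∀ I J : Finset (Fin p), UU I ∆ UU J = UU (I ∆ J) := by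
    intro I J
    ext a
    constructor
    · intro h
      rw [Finset.mem_symmDiff] at h
      rcases h with ⟨h1, h2⟩ | ⟨h1, h2⟩
      · obtain ⟨i, hiI, hi⟩ := mem_UU.mp h1
        exact mem_UU.mpr ⟨i, Finset.mem_symmDiff.mpr
          (Or.inl ⟨hiI, fun hiJ => h2 (mem_UU.mpr ⟨i, hiJ, hi⟩)⟩), hi⟩
      · obtain ⟨i, hiJ, hi⟩ := mem_UU.mp h1
        exact mem_UU.mpr ⟨i, Finset.mem_symmDiff.mpr
          (Or.inr ⟨hiJ, fun hiI => h2 (mem_UU.mpr ⟨i, hiI, hi⟩)⟩), hi⟩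
    · intro h
      obtain ⟨i, hiIJ, hi⟩ := mem_UU.mp h
      rw [Finset.mem_symmDiff] at hiIJ
      rw [Finset.mem_symmDiff]
      rcases hiIJ with ⟨hiI, hiJ⟩ | ⟨hiJ, hiI⟩
      · refine Or.inl ⟨mem_UU.mpr ⟨i, hiI, hi⟩, fun ha => ?_⟩
        obtain ⟨i', hi'J, hi'⟩ := mem_UU.mp ha
        exact hiJ ((part_unique hi hi') ▸ hi'J)
      · refine Or.inr ⟨mem_UU.mpr ⟨i, hiJ, hi⟩, fun ha => ?_⟩
        obtain ⟨i', hi'I, hi'⟩ := mem_UU.mp ha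
        exact hiI ((part_unique hi hi') ▸ hi'I)
  set Idx : Finset β → Finset (Fin p) := fun S => Finset.univ.filter (fun i => x i ∈ S) with hIdxdef
  have mem_Idx : ∀ {S : Finset β} {i : Fin p}, i ∈ Idx S ↔ x i ∈ S := by
    intro S i; rw [hIdxdef]; simp
  set φ : Finset β → Finset β := fun S => S ∆ UU (Idx S) with hφdef
  have hφS : ∀ S, S = φ S ∆ UU (Idx S) := by
    intro S; rw [hφdef]; simp [symmDiff_symmDiff_cancel_right]
  have hφmem : ∀ S ∈ M.powerset, φ S ∈ (M \ X).powerset := by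
    intro S hS
    rw [Finset.mem_powerset] at hS ⊢
    intro a ha
    rw [hφdef, Finset.mem_symmDiff] at ha
    have haM : a ∈ M := by
      rcases ha with ⟨h1, -⟩ | ⟨h1, -⟩
      · exact hS h1
      · exact hUM _ h1
    rw [Finset.mem_sdiff]
    refine ⟨haM, fun haX => ?_⟩
    rw [hXdef, Finset.mem_image] at haX
    obtain ⟨j, -, rfl⟩ := haX
    rcases ha with ⟨h1, h2⟩ | ⟨h1, h2⟩
    · exact h2 ((hUx j _).mpr (mem_Idx.mpr h1))
    · exact h2 (mem_Idx.mp ((hUx j _).mp h1))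
  -- two bad sets in the same fiber have index-sets at symmDiff distance ≤ 1
  have key : ∀ S S' : Finset β, φ S = φ S' → S.sum u < μ → S'.sum u < μ →
      ((Idx S) ∆ (Idx S')).card ≤ 1 := by
    intro S S' hf hb hb'
    by_contra hcard
    push_neg at hcard
    set K := (Idx S) ∆ (Idx S') with hK
    have hSS' : S ∆ S' = UU K := by
      conv_lhs => rw [hφS S, hφS S', hf]
      rw [symmDiff_symmDiff_symmDiff_comm, symmDiff_self, bot_symmDiff, UU_symmDiff]
    have hsub : ∀ i ∈ K, B i ⊆ (S ∩ B i) ∪ (S' ∩ B i) := by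
      intro i hi a ha
      have : a ∈ S ∆ S' := by
        rw [hSS', mem_UU]; exact ⟨i, hi, ha⟩
      rw [Finset.mem_symmDiff] at this
      rcases this with ⟨h1, -⟩ | ⟨h1, -⟩
      · exact Finset.mem_union_left _ (Finset.mem_inter.mpr ⟨h1, ha⟩)
      · exact Finset.mem_union_right _ (Finset.mem_inter.mpr ⟨h1, ha⟩)
    have hper : ∀ i ∈ K, μ ≤ (S ∩ B i).sum u + (S' ∩ B i).sum u := by
      intro i hi
      calc μ ≤ (B i).sum u := hB i
        _ ≤ ((S ∩ B i) ∪ (S' ∩ B i)).sum u :=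
          Finset.sum_le_sum_of_subset_of_nonneg (hsub i hi) (fun x _ _ => hu x)
        _ ≤ (S ∩ B i).sum u + (S' ∩ B i).sum u := sum_union_le_add hu
    have hinS : ∀ T : Finset β, K.sum (fun i => (T ∩ B i).sum u) ≤ T.sum u := by
      intro T
      rw [← Finset.sum_biUnion]
      · exact Finset.sum_le_sum_of_subset_of_nonneg
          (Finset.biUnion_subset.mpr fun i _ => Finset.inter_subset_left) (fun x _ _ => hu x)
      · intro i _ j _ hij
        exact (hdisj i j hij).mono Finset.inter_subset_right Finset.inter_subset_right
    have h2K : (2 : ℝ) ≤ (K.card : ℝ) := by exact_mod_cast hcard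
    have : μ * K.card ≤ S.sum u + S'.sum u := by
      calc μ * K.card = K.sum (fun _ => μ) := by rw [Finset.sum_const, nsmul_eq_mul, mul_comm]
        _ ≤ K.sum (fun i => (S ∩ B i).sum u + (S' ∩ B i).sum u) := Finset.sum_le_sum hper
        _ = K.sum (fun i => (S ∩ B i).sum u) + K.sum (fun i => (S' ∩ B i).sum u) :=
            Finset.sum_add_distrib
        _ ≤ S.sum u + S'.sum u := add_le_add (hinS S) (hinS S')
    nlinarith [this, hb, hb', h2K, hμ]
  set bad := M.powerset.filter (fun S => S.sum u < μ) with hbad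
  have hfib : bad.card = ∑ R ∈ (M \ X).powerset, (bad.filter (fun S => φ S = R)).card := by
    apply Finset.card_eq_sum_card_fiberwise
    intro S hS
    exact hφmem S (Finset.mem_filter.mp hS).1
  have hIdx_inj : ∀ S S' : Finset β, φ S = φ S' → Idx S = Idx S' → S = S' := by
    intro S S' hf hI
    rw [hφS S, hφS S', hf, hI]
  have singl : ∀ S S' : Finset β, S ∈ bad → S' ∈ bad → φ S = φ S' → S ≠ S' →
      ∃ i, Idx S ∆ Idx S' = {i} := by
    intro S S' hS hS' hf hne'
    have h1 : (Idx S ∆ Idx S').card ≤ 1 :=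
      key S S' hf (Finset.mem_filter.mp hS).2 (Finset.mem_filter.mp hS').2
    have h0 : Idx S ∆ Idx S' ≠ ∅ := by
      intro hh
      have : Idx S = Idx S' := by
        have := symmDiff_eq_bot.mp (hh ▸ rfl : Idx S ∆ Idx S' = ⊥)
        exact this
      exact hne' (hIdx_inj S S' hf this)
    have : (Idx S ∆ Idx S').card = 1 := le_antisymm h1 (Nat.one_le_iff_ne_zero.mpr
      (fun hc => h0 (Finset.card_eq_zero.mp hc)))
    exact Finset.card_eq_one.mp this
  have fiber2 : ∀ R : Finset β, (bad.filter (fun S => φ S = R)).card ≤ 2 := by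
    intro R
    by_contra hgt
    push_neg at hgt
    obtain ⟨Sa, Sb, Sc, hSa, hSb, hSc, hab, hac, hbc⟩ := Finset.two_lt_card_iff.mp hgt
    obtain ⟨hSa1, hfa⟩ := Finset.mem_filter.mp hSa
    obtain ⟨hSb1, hfb⟩ := Finset.mem_filter.mp hSb
    obtain ⟨hSc1, hfc⟩ := Finset.mem_filter.mp hSc
    obtain ⟨i, hi⟩ := singl Sa Sb hSa1 hSb1 (hfa.trans hfb.symm) hab
    obtain ⟨j, hj⟩ := singl Sa Sc hSa1 hSc1 (hfa.trans hfc.symm) hac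
    obtain ⟨k, hk⟩ := singl Sb Sc hSb1 hSc1 (hfb.trans hfc.symm) hbc
    have hcomb : Idx Sb ∆ Idx Sc = ({i} : Finset (Fin p)) ∆ {j} := by
      rw [← hi, ← hj, symmDiff_symmDiff_symmDiff_comm, symmDiff_self, bot_symmDiff]
    rw [hk] at hcomb
    by_cases hij : i = j
    · rw [hij, symmDiff_self] at hcomb
      simpa using (congrArg Finset.card hcomb)
    · have : ({i} : Finset (Fin p)) ∆ {j} = {i, j} := by
        ext a
        rw [Finset.mem_symmDiff]
        simp only [Finset.mem_singleton, Finset.mem_insert]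
        constructor
        · rintro (⟨rfl, -⟩ | ⟨rfl, -⟩)
          · exact Or.inl rfl
          · exact Or.inr rfl
        · rintro (rfl | rfl)
          · exact Or.inl ⟨rfl, hij⟩
          · exact Or.inr ⟨rfl, fun hh => hij hh.symm⟩
      rw [this] at hcomb
      have := congrArg Finset.card hcomb
      rw [Finset.card_singleton, Finset.card_pair hij] at this
      exact absurd this (by norm_num)
  have fiber1 : (bad.filter (fun S => φ S = ∅)).card ≤ 1 := by
    apply Finset.card_le_one.mpr
    have hkey : ∀ S ∈ bad.filter (fun S => φ S = ∅), S = (∅ : Finset β) := by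
      intro S hS
      obtain ⟨hSbad, hf⟩ := Finset.mem_filter.mp hS
      obtain ⟨hSM, hSsum⟩ := Finset.mem_filter.mp hSbad
      have hSU : S = UU (Idx S) := by
        conv_lhs => rw [hφS S]
        rw [hf]
        rw [show (∅ : Finset β) = ⊥ from rfl, bot_symmDiff]
      by_cases hI : Idx S = ∅
      · rw [hSU, hI]
        simp [hUUdef]
      · exfalso
        obtain ⟨i, hi⟩ := Finset.nonempty_iff_ne_empty.mpr hI
        have hsub : B i ⊆ S := by
          rw [hSU]; intro a ha; exact mem_UU.mpr ⟨i, hi, ha⟩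
        have : μ ≤ S.sum u := le_trans (hB i)
          (Finset.sum_le_sum_of_subset_of_nonneg hsub fun y _ _ => hu y)
        linarith
    intro Sa hSa Sb hSb
    rw [hkey Sa hSa, hkey Sb hSb]
  have hmemE : (∅ : Finset β) ∈ (M \ X).powerset := Finset.empty_mem_powerset _
  have hsum1 : bad.card ≤ 1 + 2 * (((M \ X).powerset).card - 1) := by
    rw [hfib, ← Finset.add_sum_erase _ _ hmemE]
    have h2 : ∑ R ∈ ((M \ X).powerset).erase ∅, (bad.filter (fun S => φ S = R)).card
        ≤ 2 * (((M \ X).powerset).card - 1) := by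
      calc ∑ R ∈ ((M \ X).powerset).erase ∅, (bad.filter (fun S => φ S = R)).card
          ≤ ∑ R ∈ ((M \ X).powerset).erase ∅, 2 :=
            Finset.sum_le_sum fun R _ => fiber2 R
        _ = (((M \ X).powerset).erase ∅).card * 2 := by rw [Finset.sum_const, smul_eq_mul]
        _ = 2 * (((M \ X).powerset).card - 1) := by
            rw [Finset.card_erase_of_mem hmemE, mul_comm]
    omega
  have hcards : ((M \ X).powerset).card = 2 ^ (M.card - p) := by
    rw [Finset.card_powerset, Finset.card_sdiff_of_subset hXM, hXcard]
  rw [hcards] at hsum1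
  have hpow : (1 : ℕ) ≤ 2 ^ (M.card - p) := Nat.one_le_two_pow
  have hexp : 2 ^ (M.card + 1 - p) = 2 * 2 ^ (M.card - p) := by
    rw [show M.card + 1 - p = (M.card - p) + 1 by omega, pow_succ, mul_comm]
  omega

end Core



lemma exists_mms_partition {p : ℕ} (hp : 0 < p) (M : Finset ℕ) (u : ℕ → ℝ) :
    ∃ B : Fin p → Finset ℕ, IsPartition M B ∧ ∀ i, mms p M u ≤ (B i).sum u := by
  classical
  set 𝒮 := {v : ℝ | ∃ B : Fin p → Finset ℕ, IsPartition M B ∧ v = ⨅ i, (B i).sum u} with hSdef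
  have hne : 𝒮.Nonempty := by
    refine ⟨_, ⟨fun i => if i = ⟨0, hp⟩ then M else ∅, ⟨?_, ?_⟩, rfl⟩⟩
    · intro i j hij
      by_cases hi : i = ⟨0, hp⟩
      · have hj : j ≠ ⟨0, hp⟩ := fun hh => hij (hi.trans hh.symm)
        simp [hi, hj]
      · simp [hi]
    · ext a
      simp only [Finset.mem_biUnion, Finset.mem_univ, true_and]
      constructor
      · rintro ⟨i, hi⟩
        by_cases h0 : i = ⟨0, hp⟩
        · rwa [if_pos h0] at hi
        · rw [if_neg h0] at hi; exact absurd hi (Finset.notMem_empty a)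
      · intro ha
        exact ⟨⟨0, hp⟩, by rwa [if_pos rfl]⟩
  have hfin : 𝒮.Finite := by
    have hsub : 𝒮 ⊆ (fun B : Fin p → Finset ℕ => ⨅ i, (B i).sum u) ''
        (Set.pi Set.univ (fun _ : Fin p => (↑M.powerset : Set (Finset ℕ)))) := by
      rintro v ⟨B, hB, rfl⟩
      refine ⟨B, fun i _ => ?_, rfl⟩
      rw [Finset.mem_coe, Finset.mem_powerset, ← hB.2]
      exact Finset.subset_biUnion_of_mem B (Finset.mem_univ i)
    exact Set.Finite.subset (Set.Finite.image _ (Set.Finite.pi fun _ =>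
      M.powerset.finite_toSet)) hsub
  have hmem : mms p M u ∈ 𝒮 := hne.csSup_mem hfin
  obtain ⟨B, hB, hval⟩ := hmem
  refine ⟨B, hB, fun i => ?_⟩
  rw [hval]
  exact ciInf_le (Finite.bddBelow_range _) i

lemma harris_iter {γ : Type*} [Fintype γ] [DecidableEq γ] {n : ℕ}
    (P : Fin n → Finset γ → Prop) [∀ j S, Decidable (P j S)]
    (hup : ∀ j S S', S ⊆ S' → P j S → P j S') (s : Finset (Fin n)) :
    (2 : ℝ) ^ (Fintype.card γ) *
        ∏ j ∈ s, (((univ.filter (P j)).card : ℝ) / 2 ^ (Fintype.card γ))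
      ≤ ((univ.filter (fun S : Finset γ => ∀ j ∈ s, P j S)).card : ℝ) := by
  classical
  induction s using Finset.induction_on with
  | empty =>
      simp only [Finset.prod_empty, mul_one, Finset.notMem_empty, false_implies, implies_true]
      rw [Finset.filter_true_of_mem (fun _ _ => trivial)]
      rw [Finset.card_univ, Fintype.card_finset]
      norm_num
  | @insert a s ha ih =>
      set T : ℝ := 2 ^ (Fintype.card γ) with hT
      have hTpos : (0 : ℝ) < T := by positivity
      have hsplit : (univ.filter (fun S : Finset γ => ∀ j ∈ insert a s, P j S))
          = (univ.filter (P a)) ∩ (univ.filter (fun S => ∀ j ∈ s, P j S)) := by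
        ext S
        simp only [Finset.mem_filter, Finset.mem_inter, Finset.mem_univ, true_and,
          Finset.mem_insert]
        constructor
        · intro hS
          exact ⟨hS a (Or.inl rfl), fun j hj => hS j (Or.inr hj)⟩
        · rintro ⟨h1, h2⟩ j (rfl | hj)
          · exact h1
          · exact h2 j hj
      have hupA : IsUpperSet ((univ.filter (P a) : Finset (Finset γ)) : Set (Finset γ)) := by
        intro S S' hle hS
        rw [Finset.mem_coe, Finset.mem_filter] at hS ⊢
        exact ⟨Finset.mem_univ _, hup a S S' hle hS.2⟩
      have hupF : IsUpperSet ((univ.filter (fun S : Finset γ => ∀ j ∈ s, P j S) :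
          Finset (Finset γ)) : Set (Finset γ)) := by
        intro S S' hle hS
        rw [Finset.mem_coe, Finset.mem_filter] at hS ⊢
        exact ⟨Finset.mem_univ _, fun j hj => hup j S S' hle (hS.2 j hj)⟩
      have harris := hupA.le_card_inter_finset hupF
      rw [Finset.prod_insert ha, hsplit]
      set ca : ℝ := ((univ.filter (P a)).card : ℝ)
      set cf : ℝ := ((univ.filter (fun S : Finset γ => ∀ j ∈ s, P j S)).card : ℝ)
      set ci : ℝ := (((univ.filter (P a)) ∩
        (univ.filter (fun S : Finset γ => ∀ j ∈ s, P j S))).card : ℝ)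
      have harrisR : ca * cf ≤ T * ci := by
        have := (Nat.cast_le (α := ℝ)).mpr harris
        push_cast at this
        rw [hT]
        convert this using 2
      have hca : (0:ℝ) ≤ ca := Nat.cast_nonneg _
      calc T * (ca / T * ∏ j ∈ s, (((univ.filter (P j)).card : ℝ) / T))
          = ca / T * (T * ∏ j ∈ s, (((univ.filter (P j)).card : ℝ) / T)) := by ring
        _ ≤ ca / T * cf := by
            apply mul_le_mul_of_nonneg_left ih (by positivity)
        _ = ca * cf / T := by ring
        _ ≤ ci := by rw [div_le_iff₀ hTpos]; linarith [harrisR]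

lemma group_bound {γ : Type*} [Fintype γ] [DecidableEq γ] {n p : ℕ} (hn : 0 < n) (hp2 : 2 ≤ p)
    (w : Fin n → γ → ℝ) (hw : ∀ j x, 0 ≤ w j x) (μ : Fin n → ℝ)
    (hpart : ∀ j, ∃ B : Fin p → Finset γ,
        (∀ i i', i ≠ i' → Disjoint (B i) (B i')) ∧ Finset.univ.biUnion B = Finset.univ ∧
        ∀ i, μ j ≤ (B i).sum (w j)) :
    (1 - 1/2^(p-1) : ℝ) ^ n * 2 ^ (Fintype.card γ)
      < ((univ.filter (fun S : Finset γ => ∀ j, μ j ≤ S.sum (w j))).card : ℝ) := by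
  classical
  set k := Fintype.card γ with hk
  set q : ℝ := 1/2^(p-1) with hq
  have hqpos : 0 < q := by rw [hq]; positivity
  have hqhalf : q ≤ 1/2 := by
    rw [hq]
    apply div_le_div_of_nonneg_left (by norm_num) (by norm_num)
    calc (2:ℝ) = 2^1 := (pow_one 2).symm
      _ ≤ 2^(p-1) := by
        apply pow_le_pow_right₀ (by norm_num)
        omega
  have h1q : 0 < 1 - q := by linarith
  -- per-agent bound
  have hgood : ∀ j : Fin n, (1 - q) * 2^k <
      (((univ.filter (fun S : Finset γ => μ j ≤ S.sum (w j))).card : ℝ)) := by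
    intro j
    have hcardsplit : (univ.filter (fun S : Finset γ => μ j ≤ S.sum (w j))).card
        + (univ.filter (fun S : Finset γ => S.sum (w j) < μ j)).card = 2^k := by
      have := Finset.card_filter_add_card_filter_not
        (s := (univ : Finset (Finset γ))) (p := fun S => μ j ≤ S.sum (w j))
      rw [Finset.card_univ, Fintype.card_finset] at this
      rw [← this]
      congr 1
      apply Finset.card_bij (fun S _ => S) <;> intros <;>
        simp_all [not_le]
    by_cases hμ : 0 < μ j
    · obtain ⟨B, hdisj, hcover, hval⟩ := hpart j
      have hcore := core_count (univ : Finset γ) (w j) (hw j) B hdisj hcover hμ hval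
      rw [Finset.powerset_univ, Finset.card_univ, ← hk] at hcore
      -- p ≤ k + 1 or not
      by_cases hpk : p ≤ k + 1
      · have hexp : ((2:ℕ)^(k+1-p) : ℝ) * 2^(p-1) = 2^k := by
          push_cast
          rw [← pow_add]
          congr 1
          omega
        have hbadR : ((univ.filter (fun S : Finset γ => S.sum (w j) < μ j)).card : ℝ) + 1
            ≤ (2:ℕ)^(k+1-p) := by exact_mod_cast hcore
        have h2p : (0:ℝ) < 2^(p-1) := by positivity
        have hqe : ((2:ℕ)^(k+1-p) : ℝ) = q * 2^k := by
          rw [hq]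
          rw [div_mul_eq_mul_div, one_mul, eq_div_iff (ne_of_gt h2p)]
          exact hexp
        have : ((univ.filter (fun S : Finset γ => S.sum (w j) < μ j)).card : ℝ)
            < q * 2^k := by rw [← hqe]; linarith
        have hcast : ((univ.filter (fun S : Finset γ => μ j ≤ S.sum (w j))).card : ℝ)
            = 2^k - ((univ.filter (fun S : Finset γ => S.sum (w j) < μ j)).card : ℝ) := by
          have := hcardsplit
          have h2 : ((univ.filter (fun S : Finset γ => μ j ≤ S.sum (w j))).card : ℝ)
              + ((univ.filter (fun S : Finset γ => S.sum (w j) < μ j)).card : ℝ) = 2^k := by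
            exact_mod_cast this
          linarith
        rw [hcast]
        nlinarith
      · -- p > k+1 : then k+1-p = 0, so bad count is 0
        have : (univ.filter (fun S : Finset γ => S.sum (w j) < μ j)).card = 0 := by
          have : k + 1 - p = 0 := by omega
          rw [this, pow_zero] at hcore
          omega
        have hcast : ((univ.filter (fun S : Finset γ => μ j ≤ S.sum (w j))).card : ℝ) = 2^k := by
          have h2 : (univ.filter (fun S : Finset γ => μ j ≤ S.sum (w j))).card = 2^k := by omega
          exact_mod_cast h2
        rw [hcast]
        nlinarith [pow_pos (show (0:ℝ) < 2 by norm_num) k]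
    · push_neg at hμ
      have : (univ.filter (fun S : Finset γ => μ j ≤ S.sum (w j))) = univ := by
        apply Finset.filter_true_of_mem
        intro S _
        exact le_trans hμ (Finset.sum_nonneg fun x _ => hw j x)
      rw [this, Finset.card_univ, Fintype.card_finset, ← hk]
      have h2k : (0:ℝ) < 2^k := by positivity
      push_cast
      nlinarith
  -- Harris iteration
  have hiter := harris_iter (fun j S => μ j ≤ S.sum (w j))
    (fun j S S' hle hS => le_trans hS
      (Finset.sum_le_sum_of_subset_of_nonneg hle fun x _ _ => hw j x)) Finset.univ
  have hfix : (univ.filter (fun S : Finset γ => ∀ j ∈ Finset.univ, μ j ≤ S.sum (w j)))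
      = (univ.filter (fun S : Finset γ => ∀ j, μ j ≤ S.sum (w j))) := by
    apply Finset.filter_congr
    intro S _
    simp
  rw [hfix] at hiter
  have h2k : (0:ℝ) < 2^k := by positivity
  have hprod : (1 - q)^n < ∏ j : Fin n,
      (((univ.filter (fun S : Finset γ => μ j ≤ S.sum (w j))).card : ℝ) / 2^k) := by
    have hconst : (1 - q)^n = ∏ _j : Fin n, (1 - q) := by
      rw [Finset.prod_const, Finset.card_univ, Fintype.card_fin]
    rw [hconst]
    apply Finset.prod_lt_prod_of_nonempty
    · intro j _; exact h1q
    · intro j _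
      rw [lt_div_iff₀ h2k]
      exact hgood j
    · have : Nonempty (Fin n) := ⟨⟨0, hn⟩⟩
      exact Finset.univ_nonempty
  calc (1 - q)^n * 2^k < (∏ j : Fin n,
        (((univ.filter (fun S : Finset γ => μ j ≤ S.sum (w j))).card : ℝ) / 2^k)) * 2^k := by
        nlinarith [hprod]
    _ = 2^k * ∏ j ∈ Finset.univ, (((univ.filter (fun S : Finset γ => μ j ≤ S.sum (w j))).card : ℝ) / 2^k) := by ring
    _ ≤ _ := hiter

lemma compl_map_subtype (M : Finset ℕ) (S : Finset {a // a ∈ M}) :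
    (Sᶜ).map (Function.Embedding.subtype _) = M \ S.map (Function.Embedding.subtype _) := by
  classical
  ext a
  simp only [Finset.mem_map, Finset.mem_compl, Finset.mem_sdiff,
    Function.Embedding.coe_subtype]
  constructor
  · rintro ⟨b, hb, rfl⟩
    refine ⟨b.2, fun hcon => ?_⟩
    obtain ⟨b', hb', he⟩ := hcon
    exact hb (Subtype.coe_injective he ▸ hb')
  · rintro ⟨haM, hnot⟩
    exact ⟨⟨a, haM⟩, fun hcon => hnot ⟨⟨a, haM⟩, hcon, rfl⟩, rfl⟩

theorem stmt15 (n1 n2 p : ℕ) (h1 : 0 < n1) (h2 : 0 < n2) (hp : 0 < p)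
    (h : (1 : ℝ) ≤ (1 - 1 / 2 ^ (p - 1)) ^ n1 + (1 - 1 / 2 ^ (p - 1)) ^ n2) :
    MMSalloc 2 ![n1, n2] p ∧ pMMS 2 ![n1, n2] ≤ p := by
  classical
  have hp2 : 2 ≤ p := by
    by_contra hlt
    have hp1 : p = 1 := by omega
    subst hp1
    norm_num at h
    rw [zero_pow (by omega : n1 ≠ 0), zero_pow (by omega : n2 ≠ 0)] at h
    linarith
  have main : MMSalloc 2 ![n1, n2] p := by
    intro M u hu
    set γ := {a // a ∈ M}
    have transfer : ∀ v : ℕ → ℝ, ∃ B' : Fin p → Finset γ,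
        (∀ i i', i ≠ i' → Disjoint (B' i) (B' i')) ∧ Finset.univ.biUnion B' = Finset.univ ∧
        ∀ i, mms p M v ≤ (B' i).sum (fun a => v ↑a) := by
      intro v
      obtain ⟨B, hB, hBv⟩ := exists_mms_partition hp M v
      have hBM : ∀ i, B i ⊆ M := fun i =>
        hB.2 ▸ Finset.subset_biUnion_of_mem B (Finset.mem_univ i)
      refine ⟨fun i => (B i).subtype (· ∈ M), ?_, ?_, ?_⟩
      · intro i i' hii
        rw [Finset.disjoint_left]
        intro a ha ha'
        rw [Finset.mem_subtype] at ha ha'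
        exact Finset.disjoint_left.mp (hB.1 i i' hii) ha ha'
      · ext a
        simp only [Finset.mem_biUnion, Finset.mem_univ, true_and, Finset.mem_subtype,
          iff_true]
        have haM : (a : ℕ) ∈ Finset.univ.biUnion B := by rw [hB.2]; exact a.2
        obtain ⟨i, -, hi⟩ := Finset.mem_biUnion.mp haM
        exact ⟨i, Finset.mem_subtype.mpr hi⟩
      · intro i
        have hmap : ((B i).subtype (· ∈ M)).map (Function.Embedding.subtype _) = B i := by
          rw [Finset.subtype_map]
          exact Finset.filter_true_of_mem (fun x hx => hBM i hx)
        have hsum : ((B i).subtype (· ∈ M)).sum (fun a => v ↑a) = (B i).sum v := by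
          conv_rhs => rw [← hmap]
          rw [Finset.sum_map]
          rfl
        rw [hsum]
        exact hBv i
    have hg0 := group_bound (γ := γ) h1 hp2 (fun (j : Fin n1) (a : γ) => u 0 j ↑a)
      (fun j a => hu 0 j ↑a) (fun j => mms p M (u 0 j)) (fun j => transfer (u 0 j))
    have hg1 := group_bound (γ := γ) h2 hp2 (fun (j : Fin n2) (a : γ) => u 1 j ↑a)
      (fun j a => hu 1 j ↑a) (fun j => mms p M (u 1 j)) (fun j => transfer (u 1 j))
    set k := Fintype.card γ with hk
    set G1 := Finset.univ.filter (fun S : Finset γ =>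
      ∀ j : Fin n1, mms p M (u 0 j) ≤ S.sum (fun a => u 0 j ↑a)) with hG1
    set G1' := Finset.univ.filter (fun S : Finset γ =>
      ∀ j : Fin n2, mms p M (u 1 j) ≤ S.sum (fun a => u 1 j ↑a)) with hG1'
    set G2 := Finset.univ.filter (fun S : Finset γ =>
      ∀ j : Fin n2, mms p M (u 1 j) ≤ (Sᶜ).sum (fun a => u 1 j ↑a)) with hG2
    have hcardG2 : G2.card = G1'.card := by
      apply Finset.card_bij (fun S _ => Sᶜ)
      · intro S hS
        rw [hG2, Finset.mem_filter] at hS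
        rw [hG1', Finset.mem_filter]
        exact ⟨Finset.mem_univ _, hS.2⟩
      · intro S hS S' hS' he
        exact compl_injective he
      · intro T hT
        refine ⟨Tᶜ, ?_, compl_compl T⟩
        rw [hG1', Finset.mem_filter] at hT
        rw [hG2, Finset.mem_filter]
        refine ⟨Finset.mem_univ _, ?_⟩
        rw [compl_compl]
        exact hT.2
    have hinter : (G1 ∩ G2).Nonempty := by
      rw [← Finset.card_pos]
      by_contra h0
      push_neg at h0
      have h00 : (G1 ∩ G2).card = 0 := by omega
      have hun : (G1 ∪ G2).card + (G1 ∩ G2).card = G1.card + G2.card :=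
        Finset.card_union_add_card_inter G1 G2
      have hle : (G1 ∪ G2).card ≤ 2 ^ k := by
        calc (G1 ∪ G2).card ≤ (Finset.univ : Finset (Finset γ)).card :=
              Finset.card_le_card (Finset.subset_univ _)
          _ = 2 ^ k := by rw [Finset.card_univ, Fintype.card_finset]
      have hsumN : G1.card + G2.card ≤ 2 ^ k := by omega
      have hsumR : (G1.card : ℝ) + G2.card ≤ 2 ^ k := by exact_mod_cast hsumN
      rw [hcardG2] at hsumR
      have h2k : (0:ℝ) < 2 ^ k := by positivity
      nlinarith [hg0, hg1, h, pow_pos h2k 1]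
    obtain ⟨S, hSmem⟩ := hinter
    rw [Finset.mem_inter] at hSmem
    obtain ⟨hSG1, hSG2⟩ := hSmem
    rw [hG1, Finset.mem_filter] at hSG1
    rw [hG2, Finset.mem_filter] at hSG2
    set S₀ := S.map (Function.Embedding.subtype _) with hS₀
    have hS₀M : S₀ ⊆ M := by
      intro a ha
      obtain ⟨b, -, rfl⟩ := Finset.mem_map.mp ha
      exact b.2
    have hsum0 : S₀.sum = fun (v : ℕ → ℝ) => S.sum (fun a => v ↑a) := by
      funext v
      rw [hS₀, Finset.sum_map]
      rfl
    have hsum1 : ∀ v : ℕ → ℝ, (M \ S₀).sum v = (Sᶜ).sum (fun a => v ↑a) := by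
      intro v
      rw [hS₀, ← compl_map_subtype, Finset.sum_map]
      rfl
    refine ⟨![S₀, M \ S₀], ⟨?_, ?_⟩, ?_⟩
    · intro i j hij
      fin_cases i <;> fin_cases j <;>
        first
          | exact absurd rfl hij
          | simp only [Matrix.cons_val_zero, Matrix.cons_val_one, Matrix.head_cons]
      · exact Finset.disjoint_sdiff
      · exact Finset.sdiff_disjoint
    · ext a
      simp only [Finset.mem_biUnion, Finset.mem_univ, true_and]
      constructor
      · rintro ⟨i, hi⟩
        fin_cases i
        · exact hS₀M (by simpa using hi)
        · have : a ∈ M \ S₀ := by simpa using hi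
          exact (Finset.mem_sdiff.mp this).1
      · intro haM
        by_cases haS : a ∈ S₀
        · exact ⟨0, by simpa using haS⟩
        · exact ⟨1, by simp [Finset.mem_sdiff, haM, haS]⟩
    · intro i j
      fin_cases i
      · have := hSG1.2 j
        simpa [hsum0] using this
      · have := hSG2.2 j
        rw [← hsum1] at this
        simpa using this
  exact ⟨main, Nat.sInf_le main⟩
end
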